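/- arXiv:1507.04825 — 10 statements merged into one kernel-verified Lean document; each statement's English description precedes it below -/
import Mathlib

section
/- Let Q : ℝ → Set ℝ and S : ℝ → Set ℝ be as defined below. Then S is not metrically regular around (0, 0): there exist no η > 0 and ε > 0 such that infDist(x, S⁻¹(y)) ≤ η·infDist(y, S(x)) for all x, y ∈ [−ε, ε], where S⁻¹(y) = {x | y ∈ S(x)}. -/
open Set

/-- The set-valued mapping `Q` from Example 3.3 of the paper. -/
def Q (y : ℝ) : Set ℝ :=
  {v : ℝ |
    (y = 0 ∧ v = 0) ∨
    (∃ k : ℕ, y = (2 : ℝ) ^ (-(k : ℝ) / 3) ∧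
      v ∈ Icc ((2 : ℝ) ^ (-((k : ℝ) + 1))) ((2 : ℝ) ^ (-(k : ℝ)))) ∨
    (∃ k : ℕ, y ∈ Ioo ((2 : ℝ) ^ (-((k : ℝ) + 1) / 3)) ((2 : ℝ) ^ (-(k : ℝ) / 3)) ∧
      v = (2 : ℝ) ^ (-((k : ℝ) + 1))) ∨
    (∃ k : ℕ, y = -(2 : ℝ) ^ (-(k : ℝ) / 3) ∧
      v ∈ Icc (-(2 : ℝ) ^ (-(k : ℝ))) (-(2 : ℝ) ^ (-((k : ℝ) + 1)))) ∨
    (∃ k : ℕ, y ∈ Ioo (-(2 : ℝ) ^ (-(k : ℝ) / 3)) (-(2 : ℝ) ^ (-((k : ℝ) + 1) / 3)) ∧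
      v = -(2 : ℝ) ^ (-((k : ℝ) + 1)))}

/-- The solution map `S(x) = {y | 0 ∈ x + Q(y)}` of the generalized equation. -/
def S (x : ℝ) : Set ℝ := {y : ℝ | -x ∈ Q y}

/-!
At a breakpoint `b = 2^(-(m+1)/3)` the value `Q b` is a whole interval, while just to the right of
`b` the map `Q` is the single point `2^(-(m+1))`. Hence for `x = -2^(-(m+2))` and `y` slightly
larger than `b`, the distance from `y` to `S x ∋ b` is as small as we like, whereas the distance
from `x` to `S⁻¹ y = {-2^(-(m+1))}` stays equal to `2^(-(m+2))`. The breakpoints accumulate at `0`,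
so this happens in every neighbourhood of `(0, 0)`.
-/

open Filter Metric Topology

noncomputable def breakpoint (k : ℕ) : ℝ := (2 : ℝ) ^ (-(k : ℝ) / 3)

lemma breakpoint_eq_pow (k : ℕ) : breakpoint k = ((2 : ℝ) ^ (-(1 : ℝ) / 3)) ^ k := by
  rw [breakpoint, ← Real.rpow_natCast, ← Real.rpow_mul zero_le_two]
  ring_nf

lemma two_rpow_neg_third_lt_one : (2 : ℝ) ^ (-(1 : ℝ) / 3) < 1 :=
  Real.rpow_lt_one_of_one_lt_of_neg one_lt_two (by norm_num)

lemma breakpoint_pos (k : ℕ) : 0 < breakpoint k := by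
  unfold breakpoint; positivity

lemma breakpoint_strictAnti : StrictAnti breakpoint := by
  intro i j hij
  simp only [breakpoint_eq_pow]
  exact pow_lt_pow_right_of_lt_one₀ (by positivity) two_rpow_neg_third_lt_one hij

lemma tendsto_breakpoint_atTop : Tendsto breakpoint atTop (𝓝 0) := by
  simp only [funext breakpoint_eq_pow]
  exact tendsto_pow_atTop_nhds_zero_of_lt_one (by positivity) two_rpow_neg_third_lt_one

lemma two_rpow_neg_succ_div_three (k : ℕ) :
    (2 : ℝ) ^ (-((k : ℝ) + 1) / 3) = breakpoint (k + 1) := by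
  simp [breakpoint]

lemma breakpoint_mem_S {k : ℕ} {v : ℝ}
    (hv : v ∈ Icc ((2 : ℝ) ^ (-((k : ℝ) + 1))) ((2 : ℝ) ^ (-(k : ℝ)))) :
    breakpoint k ∈ S (-v) :=
  Or.inr (Or.inl ⟨k, rfl, by rwa [neg_neg]⟩)

lemma mem_S_iff_of_mem_Ioo {m : ℕ} {y u : ℝ}
    (hy : y ∈ Ioo (breakpoint (m + 1)) (breakpoint m)) :
    y ∈ S u ↔ u = -(2 : ℝ) ^ (-((m : ℝ) + 1)) := by
  have hy0 : 0 < y := (breakpoint_pos _).trans hy.1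
  constructor
  · simp only [S, Q, mem_ofPred_eq, mem_Ioo, two_rpow_neg_succ_div_three]
    rintro (⟨rfl, -⟩ | ⟨j, rfl, -⟩ | ⟨j, ⟨hj₁, hj₂⟩, hu⟩ | ⟨j, rfl, -⟩ | ⟨j, ⟨-, hj⟩, -⟩)
    · exact absurd hy0 (lt_irrefl 0)
    · have h₁ := breakpoint_strictAnti.lt_iff_gt.mp hy.1
      have h₂ := breakpoint_strictAnti.lt_iff_gt.mp hy.2
      omega
    · have h₁ := breakpoint_strictAnti.lt_iff_gt.mp (hy.1.trans hj₂)
      have h₂ := breakpoint_strictAnti.lt_iff_gt.mp (hj₁.trans hy.2)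
      obtain rfl : j = m := by omega
      rw [← hu, neg_neg]
    · exact absurd hy0 (neg_neg_of_pos (breakpoint_pos j)).not_gt
    · exact absurd hy0 (hj.trans (neg_neg_of_pos (breakpoint_pos _))).not_gt
  · rintro rfl
    refine Or.inr (Or.inr (Or.inl ⟨m, ?_, neg_neg _⟩))
    rwa [two_rpow_neg_succ_div_three]

lemma infDist_S_preimage_of_mem_Ioo {m : ℕ} {y : ℝ}
    (hy : y ∈ Ioo (breakpoint (m + 1)) (breakpoint m)) :
    infDist (-(2 : ℝ) ^ (-((m : ℝ) + 2))) {u | y ∈ S u} = (2 : ℝ) ^ (-((m : ℝ) + 2)) := by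
  have hpreimage : {u | y ∈ S u} = {-(2 : ℝ) ^ (-((m : ℝ) + 1))} :=
    Set.ext fun _ ↦ mem_S_iff_of_mem_Ioo hy
  have hdouble : (2 : ℝ) ^ (-((m : ℝ) + 1)) = 2 * (2 : ℝ) ^ (-((m : ℝ) + 2)) := by
    rw [show -((m : ℝ) + 1) = 1 + -((m : ℝ) + 2) by ring, Real.rpow_add two_pos, Real.rpow_one]
  rw [hpreimage, infDist_singleton, Real.dist_eq, hdouble,
    abs_of_pos (by ring_nf; positivity)]
  ring

lemma infDist_S_le_abs_sub_breakpoint (m : ℕ) (y : ℝ) :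
    infDist y (S (-(2 : ℝ) ^ (-((m : ℝ) + 2)))) ≤ |y - breakpoint (m + 1)| := by
  have hmem : breakpoint (m + 1) ∈ S (-(2 : ℝ) ^ (-((m : ℝ) + 2))) := by
    refine breakpoint_mem_S ⟨le_of_eq ?_, Real.rpow_le_rpow_of_exponent_le one_le_two ?_⟩
    · push_cast; ring_nf
    · push_cast; linarith
  exact infDist_le_dist_of_mem hmem

/-- the solution map `S` is not metrically regular around `(0, 0)`. -/
theorem S_not_metrically_regular :
    ¬ ∃ η > (0 : ℝ), ∃ ε > (0 : ℝ), ∀ x ∈ Icc (-ε) ε, ∀ y ∈ Icc (-ε) ε,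
      Metric.infDist x {u : ℝ | y ∈ S u} ≤ η * Metric.infDist y (S x) := by
  rintro ⟨η, hη, ε, hε, H⟩
  obtain ⟨m, hm⟩ := (tendsto_breakpoint_atTop.eventually (gt_mem_nhds hε)).exists
  set p : ℝ := (2 : ℝ) ^ (-((m : ℝ) + 2))
  have hp : 0 < p := by positivity
  have hpm : p < breakpoint m :=
    Real.rpow_lt_rpow_of_exponent_lt one_lt_two (by linarith [m.cast_nonneg (α := ℝ)])
  obtain ⟨y, hay, hy⟩ := exists_between (lt_min (breakpoint_strictAnti m.lt_succ_self)
    (lt_add_of_pos_right (breakpoint (m + 1)) (div_pos hp hη)))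
  have hyIoo : y ∈ Ioo (breakpoint (m + 1)) (breakpoint m) := ⟨hay, (lt_min_iff.mp hy).1⟩
  have hyε : y ∈ Icc (-ε) ε := by
    constructor <;> linarith [breakpoint_pos (m + 1), hyIoo.2]
  have hpε : -p ∈ Icc (-ε) ε := by constructor <;> linarith
  have hreg := H (-p) hpε y hyε
  rw [infDist_S_preimage_of_mem_Ioo hyIoo] at hreg
  refine lt_irrefl p (calc
    p ≤ η * infDist y (S (-p)) := hreg
    _ ≤ η * |y - breakpoint (m + 1)| := by gcongr; exact infDist_S_le_abs_sub_breakpoint m y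
    _ < η * (p / η) := by
      gcongr
      rw [abs_of_pos (sub_pos.mpr hay)]
      linarith [(lt_min_iff.mp hy).2]
    _ = p := by field_simp)
end

section
/- Let Q : ℝ → Set ℝ and S : ℝ → Set ℝ be as defined below. Then S is strongly metrically 2-subregular at (0, 0) with modulus η = 1 and radius γ = 1: for every x ∈ [−1, 1] and every y ∈ S(x) one has |x| ≤ |y|². -/
open Set

lemma aux_two_sub (c : ℝ) (hc : c ≤ 0) (u v : ℝ)
    (hu : u ≤ (2 : ℝ) ^ c) (hv : (2 : ℝ) ^ (c / 3) ≤ v) : u ≤ v ^ 2 := by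
  have h2 : (0 : ℝ) < 2 := by norm_num
  have hb : (0 : ℝ) ≤ (2 : ℝ) ^ (c / 3) := (Real.rpow_pos_of_pos h2 _).le
  have hsq : ((2 : ℝ) ^ (c / 3)) ^ 2 ≤ v ^ 2 := pow_le_pow_left₀ hb hv 2
  have heq : ((2 : ℝ) ^ (c / 3)) ^ 2 = (2 : ℝ) ^ (c / 3 + c / 3) := by
    rw [sq, ← Real.rpow_add h2]
  have hmono : (2 : ℝ) ^ c ≤ (2 : ℝ) ^ (c / 3 + c / 3) :=
    Real.rpow_le_rpow_of_exponent_le one_le_two (by linarith)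
  calc u ≤ (2 : ℝ) ^ c := hu
    _ ≤ (2 : ℝ) ^ (c / 3 + c / 3) := hmono
    _ = ((2 : ℝ) ^ (c / 3)) ^ 2 := heq.symm
    _ ≤ v ^ 2 := hsq

/-- `S` is strongly metrically 2-subregular at `(0, 0)` with
modulus `η = 1` and radius `γ = 1`. -/
theorem S_strongly_two_subregular :
    ∀ x ∈ Icc (-1 : ℝ) 1, ∀ y ∈ S x, |x| ≤ |y| ^ 2 := by
  intro x _ y hy
  have h2 : (0 : ℝ) < 2 := by norm_num
  have pos : ∀ a : ℝ, (0 : ℝ) < (2 : ℝ) ^ a := fun a => Real.rpow_pos_of_pos h2 a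
  have hknn : ∀ k : ℕ, (0 : ℝ) ≤ (k : ℝ) := fun k => Nat.cast_nonneg k
  rcases hy with ⟨_, hx⟩ | ⟨k, hk, hv⟩ | ⟨k, hk, hv⟩ | ⟨k, hk, hv⟩ | ⟨k, hk, hv⟩
  · have : x = 0 := by linarith
    simp [this, sq_nonneg]
  · -- y = 2^(-k/3), -x ∈ [2^(-(k+1)), 2^(-k)]
    refine aux_two_sub (-(k : ℝ)) (by linarith [hknn k]) _ _ ?_ ?_
    · have hxneg : x < 0 := by nlinarith [hv.1, pos (-((k : ℝ) + 1))]
      rw [abs_of_neg hxneg]; exact hv.2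
    · rw [hk]; exact le_abs_self _
  · -- y ∈ (2^(-(k+1)/3), 2^(-k/3)), -x = 2^(-(k+1))
    refine aux_two_sub (-((k : ℝ) + 1)) (by linarith [hknn k]) _ _ ?_ ?_
    · have hxneg : x < 0 := by nlinarith [pos (-((k : ℝ) + 1)), hv]
      rw [abs_of_neg hxneg, hv]
    · have hy0 : (0 : ℝ) < y := lt_trans (pos _) hk.1
      rw [abs_of_pos hy0]; exact hk.1.le
  · -- y = -2^(-k/3), -x ∈ [-2^(-k), -2^(-(k+1))]
    refine aux_two_sub (-(k : ℝ)) (by linarith [hknn k]) _ _ ?_ ?_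
    · have hxpos : 0 < x := by nlinarith [hv.2, pos (-((k : ℝ) + 1))]
      rw [abs_of_pos hxpos]; linarith [hv.1]
    · rw [hk, abs_neg, abs_of_pos (pos _)]
  · -- y ∈ (-2^(-k/3), -2^(-(k+1)/3)), -x = -2^(-(k+1))
    refine aux_two_sub (-((k : ℝ) + 1)) (by linarith [hknn k]) _ _ ?_ ?_
    · have hxpos : 0 < x := by nlinarith [pos (-((k : ℝ) + 1)), hv]
      rw [abs_of_pos hxpos]; linarith [hv]
    · have hy0 : y < 0 := lt_trans hk.2 (by linarith [pos (-((k : ℝ) + 1) / 3)])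
      rw [abs_of_neg hy0]; linarith [hk.2]
end

section
/- Let X be a real Hilbert space, let f : X → ℝ be convex, let x̄* ∈ ∂f(x̄), let q > 0, and set S = {u ∈ X | x̄* ∈ ∂f(u)}. Suppose there exist α > 0 and η > 0 such that f(x) ≥ f(x̄) + ⟪x̄*, x − x̄⟫ + (qα/(1+q))·infDist(x, S)^((1+q)/q) for all x in the closed ball B(x̄, η). Then the subdifferential mapping ∂f is metrically q-subregular at (x̄, x̄*): for every x in the closed ball B(x̄, qη/(1+q)) and every x* ∈ ∂f(x) one has infDist(x, S) ≤ max(((1+q)/(qα))^q, 1)·‖x* − x̄*‖^q. -/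
open Metric
open scoped RealInnerProductSpace

/-- The (convex) subdifferential of `f : X → ℝ` at `x`. -/
def convexSubdiff {X : Type*} [NormedAddCommGroup X] [InnerProductSpace ℝ X]
    (f : X → ℝ) (x : X) : Set X :=
  {v : X | ∀ u : X, f x + ⟪v, u - x⟫ ≤ f u}

/-- the quadratic-type growth condition implies metric
q-subregularity of the subdifferential mapping at `(x̄, x̄*)`. -/
theorem growth_implies_q_subregularity_of_subdifferential
    {X : Type*} [NormedAddCommGroup X] [InnerProductSpace ℝ X] [CompleteSpace X]
    (f : X → ℝ) (hf : ConvexOn ℝ Set.univ f)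
    (xb xs : X) (hxs : xs ∈ convexSubdiff f xb)
    (q : ℝ) (hq : 0 < q) (α η : ℝ) (hα : 0 < α) (hη : 0 < η)
    (hgrow : ∀ x ∈ closedBall xb η,
      f xb + ⟪xs, x - xb⟫ + q * α / (1 + q) *
        Metric.infDist x {u : X | xs ∈ convexSubdiff f u} ^ ((1 + q) / q) ≤ f x) :
    ∀ x ∈ closedBall xb (q * η / (1 + q)), ∀ xstar ∈ convexSubdiff f x,
      Metric.infDist x {u : X | xs ∈ convexSubdiff f u} ≤
        max (((1 + q) / (q * α)) ^ q) 1 * ‖xstar - xs‖ ^ q := by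
  intro x hx xstar hxstar
  set S : Set X := {u : X | xs ∈ convexSubdiff f u} with hS
  have hxbS : xb ∈ S := hxs
  have hSne : S.Nonempty := ⟨xb, hxbS⟩
  set d := Metric.infDist x S with hd
  have hd0 : (0:ℝ) ≤ d := Metric.infDist_nonneg
  have h1q : (0:ℝ) < 1 + q := by linarith
  have hynn : (0:ℝ) ≤ ‖xstar - xs‖ := norm_nonneg _
  rcases eq_or_lt_of_le hd0 with hd0' | hdpos
  · rw [← hd0']
    exact mul_nonneg (le_trans zero_le_one (le_max_right _ _))
      (Real.rpow_nonneg hynn _)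
  -- x lies in the ball where the growth condition holds
  have hxball : x ∈ closedBall xb η := by
    rw [mem_closedBall] at hx ⊢
    have hle : q * η / (1 + q) ≤ η := by
      rw [div_le_iff₀ h1q]; nlinarith
    linarith
  set c := q * α / (1 + q) with hc
  have hcpos : 0 < c := by positivity
  set p := (1 + q) / q with hp
  have hgx : f xb + ⟪xs, x - xb⟫ + c * d ^ p ≤ f x := hgrow x hxball
  have key : ∀ ε : ℝ, 0 < ε → c * d ^ p ≤ ‖xstar - xs‖ * (d + ε) := by
    intro ε hε
    obtain ⟨u, huS, hdu⟩ := (Metric.infDist_lt_iff hSne).mp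
      (by linarith : Metric.infDist x S < d + ε)
    have h1 : f u + ⟪xs, xb - u⟫ ≤ f xb := huS xb
    have h2 : f x + ⟪xstar, u - x⟫ ≤ f u := hxstar u
    have h3 : c * d ^ p ≤ ⟪xstar - xs, x - u⟫ := by
      have e1 : ⟪xs, x - xb⟫ = ⟪xs, x⟫ - ⟪xs, xb⟫ := inner_sub_right _ _ _
      have e2 : ⟪xs, xb - u⟫ = ⟪xs, xb⟫ - ⟪xs, u⟫ := inner_sub_right _ _ _
      have e3 : ⟪xstar, u - x⟫ = ⟪xstar, u⟫ - ⟪xstar, x⟫ := inner_sub_right _ _ _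
      have e4 : ⟪xstar - xs, x - u⟫
          = ⟪xstar, x⟫ - ⟪xstar, u⟫ - (⟪xs, x⟫ - ⟪xs, u⟫) := by
        rw [inner_sub_left, inner_sub_right, inner_sub_right]; try ring
      rw [e4]
      rw [e1] at hgx
      rw [e2] at h1
      rw [e3] at h2
      linarith
    have hcs := real_inner_le_norm (xstar - xs) (x - u)
    have hxu : ‖x - u‖ ≤ d + ε := by
      rw [← dist_eq_norm]; linarith
    have := mul_le_mul_of_nonneg_left hxu hynn
    linarith
  have hypos : 0 < ‖xstar - xs‖ := by
    rcases hynn.lt_or_eq with h | h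
    · exact h
    · exfalso
      have hk := key 1 one_pos
      rw [← h, zero_mul] at hk
      nlinarith [Real.rpow_pos_of_pos hdpos p]
  have main : c * d ^ p ≤ ‖xstar - xs‖ * d := by
    apply le_of_forall_pos_le_add
    intro ε hε
    have hk := key (ε / ‖xstar - xs‖) (by positivity)
    rw [mul_add, mul_div_cancel₀ _ (ne_of_gt hypos)] at hk
    linarith
  have hdp : d ^ p = d * d ^ ((1:ℝ)/q) := by
    have hpe : p = 1 + 1/q := by rw [hp]; field_simp; ring
    rw [hpe, Real.rpow_add hdpos, Real.rpow_one]
  have step : c * d ^ ((1:ℝ)/q) ≤ ‖xstar - xs‖ := by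
    rw [hdp] at main
    have h' : d * (c * d ^ ((1:ℝ)/q)) ≤ d * ‖xstar - xs‖ := by linarith
    exact le_of_mul_le_mul_left h' hdpos
  have hdq : d ^ ((1:ℝ)/q) ≤ ‖xstar - xs‖ / c := by
    rw [le_div_iff₀ hcpos]; linarith
  have hfin : d ≤ (‖xstar - xs‖ / c) ^ q := by
    have h1 : (d ^ ((1:ℝ)/q)) ^ q ≤ (‖xstar - xs‖ / c) ^ q :=
      Real.rpow_le_rpow (Real.rpow_nonneg hd0 _) hdq hq.le
    rwa [← Real.rpow_mul hd0, one_div_mul_cancel hq.ne', Real.rpow_one] at h1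
  calc d ≤ (‖xstar - xs‖ / c) ^ q := hfin
    _ = ((1:ℝ)/c) ^ q * ‖xstar - xs‖ ^ q := by
        rw [show ‖xstar - xs‖ / c = (1/c) * ‖xstar - xs‖ by ring,
          Real.mul_rpow (by positivity) hynn]
    _ = ((1 + q) / (q * α)) ^ q * ‖xstar - xs‖ ^ q := by
        rw [hc, one_div_div]
    _ ≤ max (((1 + q) / (q * α)) ^ q) 1 * ‖xstar - xs‖ ^ q :=
        mul_le_mul_of_nonneg_right (le_max_left _ _)
          (Real.rpow_nonneg hynn _)
end

section
/- Let X be a real Hilbert space (complete), let f : X → ℝ be convex and continuous, let x̄* ∈ ∂f(x̄), let q > 0, and set S = {u ∈ X | x̄* ∈ ∂f(u)}. Suppose ∂f is metrically q-subregular at (x̄, x̄*) with modulus κ̃ > 0, i.e., there is γ > 0 such that infDist(x, S) ≤ κ̃·‖x* − x̄*‖^q for all x ∈ B(x̄, γ) and all x* ∈ ∂f(x). Then for every α with 0 < α < κ̃^(−1/q) there exists η > 0 such that f(x) ≥ f(x̄) + ⟪x̄*, x − x̄⟫ + (qα/(1+q))·infDist(x, S)^((1+q)/q) for all x in the closed ball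 B(x̄, η). -/
/-!
Subtracting the affine minorant `f xb + ⟪xs, · - xb⟫` leaves a nonnegative convex `g` whose
subgradients near `xb` have norm at least `a * d ^ e`, where `d` is the distance to `S`,
`e = 1 / q` and `a = κ ^ (-1 / q)`. The growth constant of `g` is then bootstrapped. Suppose
`g ≥ c * d ^ (e + 1)` on a ball and take a proximal step `x ↦ p`, whose residual
`k • (x - p)` is a subgradient at `p`, so that `g p + k * ‖x - p‖ ^ 2 ≤ g x`. Either the step
is long compared with `d`, and the quadratic term alone already gives the target constant
`α / (e + 1)`, or `p` stays in the ball, where the growth at `p`, the slope bound at `p` and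
Bernoulli's inequality raise `c` by a fixed amount on a slightly smaller ball. Finitely many
rounds reach `α / (e + 1)`.
-/

open Metric
open scoped RealInnerProductSpace

open Set Filter Topology

theorem mem_closedBall_of_dist_le_mul_infDist {E : Type*} [PseudoMetricSpace E] {S : Set E}
    {xb x p : E} {ρ β₀ : ℝ} (hxb : xb ∈ S) (hβ₀ : 0 ≤ β₀) (hx : x ∈ closedBall xb (ρ / (1 + β₀)))
    (hp : dist p x ≤ β₀ * infDist x S) : p ∈ closedBall xb ρ := by
  have hdx : infDist x S ≤ dist x xb := infDist_le_dist_of_mem hxb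
  rw [mem_closedBall, le_div_iff₀ (by linarith)] at hx
  rw [mem_closedBall]
  nlinarith [dist_triangle p x xb]

section

variable {X : Type*} [NormedAddCommGroup X] [InnerProductSpace ℝ X]

theorem ConvexOn.add_inner_add_const {f : X → ℝ} (hf : ConvexOn ℝ univ f) (w : X) (b : ℝ) :
    ConvexOn ℝ univ fun z => f z + (⟪w, z⟫ + b) :=
  hf.add (((innerₗ X w).convexOn convex_univ).add_const b)

theorem StrongConvexOn.exists_forall_le [CompleteSpace X] {f : X → ℝ} {m : ℝ}
    (hf : StrongConvexOn univ m f) (hm : 0 < m) (hfc : Continuous f) (hb : BddBelow (range f)) :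
    ∃ p, ∀ z, f p ≤ f z := by
  set μ := ⨅ z, f z
  have hmid : ∀ z w, m / 8 * ‖z - w‖ ^ 2 ≤ (f z + f w) / 2 - μ := by
    intro z w
    have h := hf.2 (mem_univ z) (mem_univ w) (by norm_num : (0 : ℝ) ≤ 1 / 2)
      (by norm_num : (0 : ℝ) ≤ 1 / 2) (by norm_num)
    have := ciInf_le hb ((1 / 2 : ℝ) • z + (1 / 2 : ℝ) • w)
    simp only [smul_eq_mul] at h
    linarith
  have hseq : ∀ n : ℕ, ∃ z, f z < μ + 1 / (n + 1) := fun n =>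
    exists_lt_of_ciInf_lt (lt_add_of_pos_right μ (by positivity))
  choose s hs using hseq
  have hcauchy : CauchySeq s := by
    refine cauchySeq_of_le_tendsto_0 (fun N : ℕ => √(8 / m * (1 / (N + 1))))
      (fun n k N hn hk => ?_) ?_
    · have hn' : 1 / ((n : ℝ) + 1) ≤ 1 / (N + 1) := by gcongr
      have hk' : 1 / ((k : ℝ) + 1) ≤ 1 / (N + 1) := by gcongr
      have h : m / 8 * ‖s n - s k‖ ^ 2 ≤ 1 / (N + 1) := by
        linarith [hmid (s n) (s k), hs n, hs k]
      rw [dist_eq_norm, Real.le_sqrt (norm_nonneg _) (by positivity)]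
      calc ‖s n - s k‖ ^ 2 = 8 / m * (m / 8 * ‖s n - s k‖ ^ 2) := by field_simp
        _ ≤ 8 / m * (1 / (N + 1)) := by gcongr
    · simpa using (tendsto_one_div_add_atTop_nhds_zero_nat.const_mul (8 / m)).sqrt
  obtain ⟨p, hp⟩ := cauchySeq_tendsto_of_complete hcauchy
  refine ⟨p, fun z => ?_⟩
  have hlim : Tendsto (fun n : ℕ => f z + 1 / ((n : ℝ) + 1)) atTop (𝓝 (f z)) := by
    simpa using tendsto_one_div_add_atTop_nhds_zero_nat.const_add (f z)
  exact le_of_tendsto_of_tendsto' ((hfc.tendsto p).comp hp) hlim fun n =>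
    (hs n).le.trans (by gcongr; exact ciInf_le hb z)

theorem ConvexOn.strongConvexOn_add_norm_sub_sq {g : X → ℝ} (hg : ConvexOn ℝ univ g)
    (x : X) (m : ℝ) : StrongConvexOn univ m fun z => g z + m / 2 * ‖z - x‖ ^ 2 := by
  rw [strongConvexOn_iff_convex]
  convert hg.add_inner_add_const (-(m • x)) (m / 2 * ‖x‖ ^ 2) using 2 with z
  rw [norm_sub_sq_real, inner_neg_left, real_inner_smul_left, real_inner_comm]
  ring

theorem smul_sub_mem_convexSubdiff_of_forall_le {g : X → ℝ} (hg : ConvexOn ℝ univ g)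
    {x p : X} {m : ℝ} (hp : ∀ z, g p + m / 2 * ‖p - x‖ ^ 2 ≤ g z + m / 2 * ‖z - x‖ ^ 2) :
    m • (x - p) ∈ convexSubdiff g p := by
  intro z
  set A := g z - g p - ⟪m • (x - p), z - p⟫
  have hA : ∀ t ∈ Ioc (0 : ℝ) 1, 0 ≤ A + t * (m / 2 * ‖z - p‖ ^ 2) := by
    rintro t ⟨ht0, ht1⟩
    have hconv : g (p + t • (z - p)) ≤ (1 - t) * g p + t * g z := by
      have := hg.2 (mem_univ p) (mem_univ z) (sub_nonneg.2 ht1) ht0.le (sub_add_cancel 1 t)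
      rwa [show (1 - t) • p + t • z = p + t • (z - p) by module] at this
    have hnorm : ‖p + t • (z - p) - x‖ ^ 2
        = ‖p - x‖ ^ 2 + 2 * t * ⟪p - x, z - p⟫ + t ^ 2 * ‖z - p‖ ^ 2 := by
      rw [show p + t • (z - p) - x = (p - x) + t • (z - p) by abel, norm_add_sq_real,
        real_inner_smul_right, norm_smul, Real.norm_eq_abs, mul_pow, sq_abs]
      ring
    have hinner : ⟪m • (x - p), z - p⟫ = -(m * ⟪p - x, z - p⟫) := by
      rw [real_inner_smul_left, ← neg_sub p x, inner_neg_left]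
      ring
    have := hp (p + t • (z - p))
    rw [hnorm] at this
    have key : 0 ≤ t * (A + t * (m / 2 * ‖z - p‖ ^ 2)) := by
      simp only [A, hinner]
      nlinarith
    exact nonneg_of_mul_nonneg_right key ht0
  have hlim : Tendsto (fun t : ℝ => A + t * (m / 2 * ‖z - p‖ ^ 2)) (𝓝[>] 0) (𝓝 A) := by
    have : Continuous fun t : ℝ => A + t * (m / 2 * ‖z - p‖ ^ 2) := by fun_prop
    simpa using (this.tendsto 0).mono_left nhdsWithin_le_nhds
  have := ge_of_tendsto hlim (eventually_of_mem (Ioc_mem_nhdsGT one_pos) hA)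
  simp only [A] at this
  linarith

theorem ConvexOn.exists_smul_sub_mem_convexSubdiff [CompleteSpace X] {g : X → ℝ}
    (hg : ConvexOn ℝ univ g) (hgc : Continuous g) (hb : BddBelow (range g)) (x : X) {m : ℝ}
    (hm : 0 < m) : ∃ p, m • (x - p) ∈ convexSubdiff g p := by
  obtain ⟨b, hb⟩ := hb
  obtain ⟨p, hp⟩ := (hg.strongConvexOn_add_norm_sub_sq x m).exists_forall_le hm (by fun_prop)
    ⟨b, by rintro _ ⟨z, rfl⟩; have := hb ⟨z, rfl⟩; dsimp only; nlinarith [sq_nonneg ‖z - x‖]⟩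
  exact ⟨p, smul_sub_mem_convexSubdiff_of_forall_le hg hp⟩

theorem mem_convexSubdiff_sub_inner_iff {f : X → ℝ} {b : ℝ} {w z₀ u v : X} :
    v ∈ convexSubdiff (fun z => f z - b - ⟪w, z - z₀⟫) u ↔ w + v ∈ convexSubdiff f u := by
  refine forall_congr' fun z => ?_
  have : ⟪w, z - z₀⟫ - ⟪w, u - z₀⟫ = ⟪w, z - u⟫ := by
    rw [← inner_sub_right, sub_sub_sub_cancel_right]
  rw [inner_add_left]
  constructor <;> intro h <;> linarith

theorem rpow_neg_one_div_mul_rpow_inv_le {κ q d w : ℝ} (hκ : 0 < κ) (hq : 0 < q) (hd : 0 ≤ d)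
    (hw : 0 ≤ w) (h : d ≤ κ * w ^ q) : κ ^ (-(1 : ℝ) / q) * d ^ q⁻¹ ≤ w := by
  have hdiv : κ ^ (-(1 : ℝ) / q) * d ^ q⁻¹ = (d / κ) ^ q⁻¹ := by
    rw [Real.div_rpow hd hκ.le, neg_div, one_div, Real.rpow_neg hκ.le, div_eq_mul_inv, mul_comm]
  rw [hdiv, Real.rpow_inv_le_iff_of_pos (by positivity) hw hq, div_le_iff₀ hκ, mul_comm]
  exact h

theorem growth_bootstrap {a e c α β β₀ d d' : ℝ} (ha : 0 ≤ a) (he : 0 ≤ e) (hc : 0 ≤ c)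
    (hcα : c * (e + 1) ≤ α) (hβ : 0 ≤ β) (hββ₀ : β ≤ β₀) (hβ₀ : β₀ ≤ 1) (hd : 0 < d)
    (hd' : (1 - β) * d ≤ d') :
    (c + β * (a * (1 - β₀) ^ e - α)) * d ^ (e + 1) ≤ c * d' ^ (e + 1) + a * d' ^ e * (β * d) := by
  have h1β : 0 ≤ 1 - β := by linarith
  have hbern : 1 + (e + 1) * -β ≤ (1 + -β) ^ (e + 1) :=
    one_add_mul_self_le_rpow_one_add (by linarith) (by linarith)
  rw [← sub_eq_add_neg] at hbern
  have hmono : a * (1 - β₀) ^ e ≤ a * (1 - β) ^ e := by gcongr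
  calc (c + β * (a * (1 - β₀) ^ e - α)) * d ^ (e + 1)
      ≤ (c * (1 - β) ^ (e + 1) + a * (1 - β) ^ e * β) * d ^ (e + 1) := by
        gcongr ?_ * _
        nlinarith [mul_le_mul_of_nonneg_left hbern hc, mul_le_mul_of_nonneg_right hmono hβ,
          mul_le_mul_of_nonneg_right hcα hβ]
    _ = c * ((1 - β) * d) ^ (e + 1) + a * ((1 - β) * d) ^ e * (β * d) := by
        rw [Real.mul_rpow h1β hd.le, Real.mul_rpow h1β hd.le, Real.rpow_add_one hd.ne']
        ring
    _ ≤ c * d' ^ (e + 1) + a * d' ^ e * (β * d) := by gcongr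

theorem relative_step_length_ge {a e β β₀ M d d' : ℝ} (ha : 0 ≤ a) (he : 0 ≤ e) (hM : 0 < M)
    (hd : 0 < d) (hββ₀ : β ≤ β₀) (hβ₀ : β₀ ≤ 1) (hd' : (1 - β) * d ≤ d')
    (hslope : a * d' ^ e ≤ M * β * d ^ e) :
    a * (1 - β₀) ^ e / M ≤ β := by
  have h : a * (1 - β₀) ^ e * d ^ e ≤ M * β * d ^ e :=
    calc a * (1 - β₀) ^ e * d ^ e = a * ((1 - β₀) * d) ^ e := by
          rw [Real.mul_rpow (by linarith) hd.le]; ring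
      _ ≤ a * ((1 - β) * d) ^ e := by gcongr
      _ ≤ a * d' ^ e := by gcongr; exact mul_nonneg (by linarith) hd.le
      _ ≤ M * β * d ^ e := hslope
  rw [div_le_iff₀ hM, mul_comm β]
  exact le_of_mul_le_mul_right h (by positivity)

theorem growth_step [CompleteSpace X] {g : X → ℝ} {S : Set X} {xb : X} {a e γ c α β₀ M ρ : ℝ}
    (hg : ConvexOn ℝ univ g) (hgc : Continuous g) (hg0 : ∀ z, 0 ≤ g z) (hxb : xb ∈ S)
    (hslope : ∀ u ∈ closedBall xb γ, ∀ v ∈ convexSubdiff g u, a * infDist u S ^ e ≤ ‖v‖)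
    (ha : 0 ≤ a) (he : 0 ≤ e) (hβ₀ : 0 ≤ β₀) (hβ₀1 : β₀ ≤ 1) (hM : 0 < M) (hc : 0 ≤ c)
    (hcα : c * (e + 1) ≤ α) (hα : α ≤ a * (1 - β₀) ^ e) (hργ : ρ ≤ γ)
    (hgrowth : ∀ y ∈ closedBall xb ρ, c * infDist y S ^ (e + 1) ≤ g y) :
    ∀ x ∈ closedBall xb (ρ / (1 + β₀)),
      min (c + a * (1 - β₀) ^ e * (a * (1 - β₀) ^ e - α) / M) (M * β₀ ^ 2) *
        infDist x S ^ (e + 1) ≤ g x := by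
  intro x hx
  set α' := a * (1 - β₀) ^ e
  set d := infDist x S
  rcases (show 0 ≤ d from infDist_nonneg).eq_or_lt with hd | hd
  · rw [← hd, Real.zero_rpow (by linarith), mul_zero]
    exact hg0 x
  -- scaled so that a step of length `β₀ * d` costs exactly `M * β₀ ^ 2 * d ^ (e + 1)`
  set k := M * d ^ e / d
  obtain ⟨p, hp⟩ := hg.exists_smul_sub_mem_convexSubdiff hgc
    ⟨0, by rintro _ ⟨z, rfl⟩; exact hg0 z⟩ x (m := k) (by positivity)
  set D := ‖x - p‖
  have hgx : g p + k * D ^ 2 ≤ g x := by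
    simpa [real_inner_smul_left, real_inner_self_eq_norm_sq] using hp x
  by_cases hD : β₀ * d ≤ D
  · calc _ ≤ M * β₀ ^ 2 * d ^ (e + 1) := by gcongr; exact min_le_right _ _
      _ = k * (β₀ * d) ^ 2 := by rw [Real.rpow_add_one hd.ne']; simp only [k]; field_simp
      _ ≤ k * D ^ 2 := by gcongr
      _ ≤ g x := by linarith [hg0 p]
  push Not at hD
  have hpρ : p ∈ closedBall xb ρ :=
    mem_closedBall_of_dist_le_mul_infDist hxb hβ₀ hx (by rw [dist_comm, dist_eq_norm]; exact hD.le)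
  have hβ₀' : D / d < β₀ := (div_lt_iff₀ hd).2 hD
  set d' := infDist p S
  have hdd' : (1 - D / d) * d ≤ d' := by
    have := infDist_le_infDist_add_dist (x := x) (y := p) (s := S)
    rw [dist_eq_norm] at this
    rw [sub_mul, div_mul_cancel₀ _ hd.ne', one_mul]
    linarith
  have hslope_p : a * d' ^ e ≤ k * D := by
    have := hslope p (closedBall_subset_closedBall hργ hpρ) _ hp
    rwa [norm_smul, Real.norm_of_nonneg (by positivity)] at this
  have hβ := relative_step_length_ge ha he hM hd hβ₀'.le hβ₀1 hdd'
    (hslope_p.trans_eq (by simp only [k]; field_simp))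
  have key := growth_bootstrap ha he hc hcα (div_nonneg (norm_nonneg _) hd.le) hβ₀'.le hβ₀1 hd
    hdd'
  rw [div_mul_cancel₀ _ hd.ne'] at key
  calc _ ≤ (c + D / d * (α' - α)) * d ^ (e + 1) := by
        gcongr
        refine (min_le_left _ _).trans ?_
        rw [mul_div_right_comm]
        gcongr
    _ ≤ c * d' ^ (e + 1) + a * d' ^ e * D := key
    _ ≤ g p + k * D * D := by gcongr; exact hgrowth p hpρ
    _ ≤ g x := by linarith

theorem growth_iterate [CompleteSpace X] {g : X → ℝ} {S : Set X} {xb : X} {a e γ α β₀ M : ℝ}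
    (hg : ConvexOn ℝ univ g) (hgc : Continuous g) (hg0 : ∀ z, 0 ≤ g z) (hxb : xb ∈ S)
    (hslope : ∀ u ∈ closedBall xb γ, ∀ v ∈ convexSubdiff g u, a * infDist u S ^ e ≤ ‖v‖)
    (ha : 0 ≤ a) (he : 0 ≤ e) (hγ : 0 ≤ γ) (hβ₀ : 0 ≤ β₀) (hβ₀1 : β₀ ≤ 1) (hM : 0 < M)
    (hα : α ≤ a * (1 - β₀) ^ e) (hMα : M * β₀ ^ 2 * (e + 1) ≤ α) (n : ℕ) :
    ∀ x ∈ closedBall xb (γ / (1 + β₀) ^ n),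
      min (n * (a * (1 - β₀) ^ e * (a * (1 - β₀) ^ e - α) / M)) (M * β₀ ^ 2) *
        infDist x S ^ (e + 1) ≤ g x := by
  set δ := a * (1 - β₀) ^ e * (a * (1 - β₀) ^ e - α) / M
  have hδ : 0 ≤ δ := div_nonneg (mul_nonneg (by positivity) (by linarith)) hM.le
  induction n with
  | zero =>
    intro x _
    rw [Nat.cast_zero, zero_mul, min_eq_left (by positivity), zero_mul]
    exact hg0 x
  | succ n ih =>
    intro x hx
    rw [pow_succ, ← div_div] at hx
    refine le_trans ?_ (growth_step hg hgc hg0 hxb hslope ha he hβ₀ hβ₀1 hM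
      (le_min (by positivity) (by positivity))
      (((mul_le_mul_of_nonneg_right (min_le_right _ _) (by linarith))).trans hMα) hα
      (div_le_self hγ (one_le_pow₀ (by linarith))) ih x hx)
    refine mul_le_mul_of_nonneg_right ?_ (Real.rpow_nonneg infDist_nonneg _)
    show min ((n + 1 : ℕ) * δ) (M * β₀ ^ 2) ≤ min (min (n * δ) (M * β₀ ^ 2) + δ) (M * β₀ ^ 2)
    rw [← min_add_add_right]
    push_cast
    exact le_min (le_min ((min_le_left _ _).trans (by linarith))
      ((min_le_right _ _).trans (by linarith))) (min_le_right _ _)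

theorem exists_growth_of_slope_bound [CompleteSpace X] {g : X → ℝ} {S : Set X} {xb : X}
    {a e γ α : ℝ} (hg : ConvexOn ℝ univ g) (hgc : Continuous g) (hg0 : ∀ z, 0 ≤ g z)
    (hxb : xb ∈ S) (he : 0 ≤ e) (hγ : 0 < γ)
    (hslope : ∀ u ∈ closedBall xb γ, ∀ v ∈ convexSubdiff g u, a * infDist u S ^ e ≤ ‖v‖)
    (hα : 0 < α) (hαa : α < a) :
    ∃ η > 0, ∀ x ∈ closedBall xb η, α / (e + 1) * infDist x S ^ (e + 1) ≤ g x := by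
  obtain ⟨β₀, hαβ₀, hβ₀, hβ₀1⟩ : ∃ β₀, α < a * (1 - β₀) ^ e ∧ 0 < β₀ ∧ β₀ < 1 := by
    have hcont : Continuous fun t : ℝ => a * (1 - t) ^ e :=
      ((continuous_const.sub continuous_id).rpow_const fun _ => Or.inr he).const_mul a
    have hlim : Tendsto (fun t : ℝ => a * (1 - t) ^ e) (𝓝[>] 0) (𝓝 a) := by
      simpa using (hcont.tendsto 0).mono_left nhdsWithin_le_nhds
    exact ((hlim.eventually (lt_mem_nhds hαa)).and (Ioo_mem_nhdsGT one_pos)).exists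
  set α' := a * (1 - β₀) ^ e
  set M := α / (e + 1) / β₀ ^ 2
  have hM : 0 < M := by positivity
  have hMβ₀ : M * β₀ ^ 2 = α / (e + 1) := by simp only [M]; field_simp
  set δ := α' * (α' - α) / M
  have hδ : 0 < δ := div_pos (mul_pos (by linarith) (by linarith)) hM
  obtain ⟨n, hn⟩ := exists_nat_gt (α / (e + 1) / δ)
  refine ⟨γ / (1 + β₀) ^ n, by positivity, fun x hx => ?_⟩
  have h : min (n * δ) (M * β₀ ^ 2) * infDist x S ^ (e + 1) ≤ g x :=
    growth_iterate hg hgc hg0 hxb hslope (by linarith) he hγ.le hβ₀.le hβ₀1.le hM hαβ₀.le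
      (by rw [hMβ₀, div_mul_cancel₀ _ (by positivity)]) n x hx
  rwa [hMβ₀, min_eq_right ((div_le_iff₀ hδ).1 hn.le)] at h

end

/-- metric q-subregularity of the subdifferential mapping with
modulus `κ̃` implies the growth condition with any rate `α < κ̃^(-1/q)`. -/
theorem q_subregularity_of_subdifferential_implies_growth
    {X : Type*} [NormedAddCommGroup X] [InnerProductSpace ℝ X] [CompleteSpace X]
    (f : X → ℝ) (hf : ConvexOn ℝ Set.univ f) (hfc : Continuous f)
    (xb xs : X) (hxs : xs ∈ convexSubdiff f xb)
    (q : ℝ) (hq : 0 < q) (κ γ : ℝ) (hκ : 0 < κ) (hγ : 0 < γ)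
    (hsub : ∀ x ∈ closedBall xb γ, ∀ xstar ∈ convexSubdiff f x,
      Metric.infDist x {u : X | xs ∈ convexSubdiff f u} ≤ κ * ‖xstar - xs‖ ^ q) :
    ∀ α : ℝ, 0 < α → α < κ ^ (-(1 : ℝ) / q) →
      ∃ η > (0 : ℝ), ∀ x ∈ closedBall xb η,
        f xb + ⟪xs, x - xb⟫ + q * α / (1 + q) *
          Metric.infDist x {u : X | xs ∈ convexSubdiff f u} ^ ((1 + q) / q) ≤ f x := by
  intro α hα hαa
  set g : X → ℝ := fun z => f z - f xb - ⟪xs, z - xb⟫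
  have hg : ConvexOn ℝ univ g := by
    convert hf.add_inner_add_const (-xs) (⟪xs, xb⟫ - f xb) using 2 with z
    simp only [g, inner_neg_left, inner_sub_right]
    ring
  have hg0 : ∀ z, 0 ≤ g z := fun z => by linarith [hxs z]
  obtain ⟨η, hη, hgrowth⟩ := exists_growth_of_slope_bound (xb := xb)
    (S := {u | xs ∈ convexSubdiff f u}) hg (by fun_prop) hg0 hxs (inv_nonneg.2 hq.le) hγ
    (fun u hu v hv => rpow_neg_one_div_mul_rpow_inv_le hκ hq infDist_nonneg (norm_nonneg v)
      (by simpa using hsub u hu _ (mem_convexSubdiff_sub_inner_iff.1 hv))) hα hαa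
  refine ⟨η, hη, fun x hx => ?_⟩
  have h := hgrowth x hx
  rw [show q⁻¹ + 1 = (1 + q) / q by field_simp, show α / ((1 + q) / q) = q * α / (1 + q) by
    field_simp] at h
  simp only [g] at h
  linarith
end

section
/- Let f : ℝ → ℝ be the convex function f(x) = max(1, |x|), and let ∂f(x) = {v ∈ ℝ | f(u) ≥ f(x) + v·(u − x) for all u ∈ ℝ} be its convex subdifferential. Then the subdifferential mapping ∂f is not metrically regular around (0, 0): there exist no η > 0 and ε > 0 such that infDist(x, {u | y ∈ ∂f(u)}) ≤ η·infDist(y, ∂f(x)) for all x, y ∈ [−ε, ε]. -/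
open Set

/-- The convex subdifferential of `f(x) = max 1 |x|` on the real line. -/
def subdiffMaxOneAbs (x : ℝ) : Set ℝ :=
  {v : ℝ | ∀ u : ℝ, max 1 |x| + v * (u - x) ≤ max 1 |u|}

lemma subdiff_zero : subdiffMaxOneAbs 0 = {0} := by
  ext v
  simp only [subdiffMaxOneAbs, mem_setOf_eq, mem_singleton_iff]
  constructor
  · intro h
    have h1 := h 1
    have h2 := h (-1)
    simp at h1 h2
    linarith
  · intro h u
    subst h
    simp [le_max_left]

lemma one_mem_preimage {y : ℝ} (hy0 : 0 ≤ y) (hy1 : y ≤ 1) :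
    y ∈ subdiffMaxOneAbs 1 := by
  intro u
  simp only [abs_one, max_self]
  rcases le_or_gt 1 u with h | h
  · have : max 1 |u| = u := by
      rw [abs_of_nonneg (by linarith)]
      exact max_eq_right h
    rw [this]
    nlinarith
  · have : (1:ℝ) ≤ max 1 |u| := le_max_left _ _
    nlinarith

lemma preimage_subset {y : ℝ} (hy : 0 < y) :
    {u : ℝ | y ∈ subdiffMaxOneAbs u} ⊆ Ici (1:ℝ) := by
  intro u hu
  simp only [mem_Ici]
  by_contra h
  push_neg at h
  have := hu 1
  simp only [abs_one, max_self] at this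
  have h1 : (1:ℝ) ≤ max 1 |u| := le_max_left _ _
  nlinarith

/-- the subdifferential mapping of `f(x) = max 1 |x|` is not
metrically regular around `(0, 0)`. -/
theorem subdiff_max_one_abs_not_metrically_regular :
    ¬ ∃ η > (0 : ℝ), ∃ ε > (0 : ℝ), ∀ x ∈ Icc (-ε) ε, ∀ y ∈ Icc (-ε) ε,
      Metric.infDist x {u : ℝ | y ∈ subdiffMaxOneAbs u} ≤
        η * Metric.infDist y (subdiffMaxOneAbs x) := by
  rintro ⟨η, hη, ε, hε, h⟩
  set y := min ε (min (1 / (2 * η)) (1/2)) with hy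
  have hy0 : 0 < y := by positivity
  have hyε : y ≤ ε := min_le_left _ _
  have hyη : y ≤ 1 / (2 * η) := le_trans (min_le_right _ _) (min_le_left _ _)
  have hy1 : y ≤ 1/2 := le_trans (min_le_right _ _) (min_le_right _ _)
  have h0mem : (0:ℝ) ∈ Icc (-ε) ε := by constructor <;> linarith
  have hymem : y ∈ Icc (-ε) ε := by constructor <;> linarith
  have key := h 0 h0mem y hymem
  rw [subdiff_zero, Metric.infDist_singleton] at key
  have hdist : dist y 0 = y := by
    rw [Real.dist_eq, sub_zero, abs_of_pos hy0]
  rw [hdist] at key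
  -- lower bound on the left side
  have hne : ({u : ℝ | y ∈ subdiffMaxOneAbs u}).Nonempty :=
    ⟨1, one_mem_preimage hy0.le (by linarith)⟩
  have hlb : (1:ℝ) ≤ Metric.infDist 0 {u : ℝ | y ∈ subdiffMaxOneAbs u} := by
    by_contra hc
    push_neg at hc
    obtain ⟨u, hu, hdu⟩ := (Metric.infDist_lt_iff hne).mp hc
    have h1 : (1:ℝ) ≤ u := preimage_subset hy0 hu
    rw [Real.dist_eq, abs_sub_comm, sub_zero] at hdu
    have := le_abs_self u
    linarith
  have : η * y ≤ 1/2 := by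
    have := mul_le_mul_of_nonneg_left hyη hη.le
    rw [mul_one_div] at this
    calc η * y ≤ η / (2 * η) := this
    _ = 1/2 := by field_simp
  linarith
end

section
/- Let X be a Banach space, Y a normed space, F : X → Set Y a set-valued mapping with ȳ ∈ F(x̄), g : X → Y a single-valued mapping, and q ≥ 1. Suppose there are κ > 0, λ > 0 with λ·κ^(1/q) < 1 and γ ∈ (0, 1) such that for every x in the closed ball B(x̄, γ): (a) ‖x − x̄‖ ≤ κ·‖y − ȳ‖^q for all y ∈ F(x), and (b) ‖g(x) − g(x̄)‖ ≤ λ·‖x − x̄‖. Then the perturbed mapping x ↦ F(x) − g(x̄) + g(x) is strongly metrically q-subregular at (x̄, ȳ) with modulus κ/(1 − λκ^(1/q))^q: for every x ∈ B(x̄, γ) and every z of the form z = w + g(x) − g(x̄) with w ∈ F(x), one has ‖x − x̄‖ ≤ (κ/(1 − λκ^(1/q))^q)·‖z − ȳ‖^q. -/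
open Metric

/-- strong metric q-subregularity is preserved under Lipschitzian
single-valued perturbations, with modulus `κ / (1 - λ κ^(1/q))^q`. -/
theorem strong_q_subregularity_under_lipschitz_perturbation
    {X Y : Type*} [NormedAddCommGroup X] [CompleteSpace X] [NormedAddCommGroup Y]
    (F : X → Set Y) (xb : X) (yb : Y) (hyb : yb ∈ F xb)
    (g : X → Y) (q : ℝ) (hq : 1 ≤ q)
    (κ lam : ℝ) (hκ : 0 < κ) (hlam : 0 < lam)
    (hsmall : lam * κ ^ ((1 : ℝ) / q) < 1)
    (γ : ℝ) (hγ0 : 0 < γ) (hγ1 : γ < 1)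
    (hsub : ∀ x ∈ closedBall xb γ, ∀ y ∈ F x, ‖x - xb‖ ≤ κ * ‖y - yb‖ ^ q)
    (hlip : ∀ x ∈ closedBall xb γ, ‖g x - g xb‖ ≤ lam * ‖x - xb‖) :
    ∀ x ∈ closedBall xb γ, ∀ w ∈ F x,
      ‖x - xb‖ ≤ κ / (1 - lam * κ ^ ((1 : ℝ) / q)) ^ q *
        ‖w + g x - g xb - yb‖ ^ q := by
  intro x hx w hw
  have hq0 : (0 : ℝ) < q := lt_of_lt_of_le one_pos hq
  set s : ℝ := 1 - lam * κ ^ ((1 : ℝ) / q) with hs_def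
  have hs : 0 < s := by simp only [hs_def]; linarith
  have hsq : 0 < s ^ q := Real.rpow_pos_of_pos hs q
  have h1 := hsub x hx w hw
  have h2 := hlip x hx
  have ha : (0 : ℝ) ≤ ‖w - yb‖ := norm_nonneg _
  have hbz : (0 : ℝ) ≤ ‖w + g x - g xb - yb‖ := norm_nonneg _
  rcases eq_or_lt_of_le (norm_nonneg (x - xb)) with h0 | h0
  · rw [← h0]
    positivity
  · have ht1 : ‖x - xb‖ ≤ 1 :=
      le_of_lt (lt_of_le_of_lt (mem_closedBall_iff_norm.mp hx) hγ1)
    have hle : ‖x - xb‖ ≤ ‖x - xb‖ ^ ((1 : ℝ) / q) := by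
      calc ‖x - xb‖ = ‖x - xb‖ ^ (1 : ℝ) := (Real.rpow_one _).symm
        _ ≤ ‖x - xb‖ ^ ((1 : ℝ) / q) :=
          Real.rpow_le_rpow_of_exponent_ge h0 ht1 (by rw [div_le_one hq0]; exact hq)
    have h3 : ‖x - xb‖ ^ ((1 : ℝ) / q) ≤ κ ^ ((1 : ℝ) / q) * ‖w - yb‖ := by
      calc ‖x - xb‖ ^ ((1 : ℝ) / q) ≤ (κ * ‖w - yb‖ ^ q) ^ ((1 : ℝ) / q) :=
            Real.rpow_le_rpow h0.le h1 (by positivity)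
        _ = κ ^ ((1 : ℝ) / q) * (‖w - yb‖ ^ q) ^ ((1 : ℝ) / q) :=
            Real.mul_rpow hκ.le (by positivity)
        _ = κ ^ ((1 : ℝ) / q) * ‖w - yb‖ := by
            rw [← Real.rpow_mul ha, mul_one_div, div_self hq0.ne', Real.rpow_one]
    have hgt : ‖g x - g xb‖ ≤ lam * (κ ^ ((1 : ℝ) / q) * ‖w - yb‖) := by
      have := hle.trans h3
      nlinarith
    have hnorm : ‖w - yb‖ - ‖g x - g xb‖ ≤ ‖w + g x - g xb - yb‖ := by
      have h := norm_sub_norm_le (w - yb) (g xb - g x)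
      have e1 : w - yb - (g xb - g x) = w + g x - g xb - yb := by abel
      have e2 : ‖g xb - g x‖ = ‖g x - g xb‖ := norm_sub_rev _ _
      rw [e1, e2] at h
      exact h
    have hb : s * ‖w - yb‖ ≤ ‖w + g x - g xb - yb‖ := by
      have : s * ‖w - yb‖ ≤ ‖w - yb‖ - ‖g x - g xb‖ := by
        simp only [hs_def]; nlinarith
      exact this.trans hnorm
    have hbq : s ^ q * ‖w - yb‖ ^ q ≤ ‖w + g x - g xb - yb‖ ^ q := by
      calc s ^ q * ‖w - yb‖ ^ q = (s * ‖w - yb‖) ^ q := (Real.mul_rpow hs.le ha).symm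
        _ ≤ ‖w + g x - g xb - yb‖ ^ q := Real.rpow_le_rpow (by positivity) hb hq0.le
    calc ‖x - xb‖ ≤ κ * ‖w - yb‖ ^ q := h1
      _ = κ / s ^ q * (s ^ q * ‖w - yb‖ ^ q) := by field_simp
      _ ≤ κ / s ^ q * ‖w + g x - g xb - yb‖ ^ q := by
          exact mul_le_mul_of_nonneg_left hbq (by positivity)
end

section
/- Let X be a Banach space, Y a normed space, F : X → Set Y with ȳ ∈ F(x̄), g : X → Y locally Lipschitz around x̄, and q ≥ 1. Denote by ssubreg the exact strong q-subregularity bound of F at (x̄, ȳ) and by lip the local Lipschitz modulus of g at x̄. If 0 < ssubreg < ∞, lip < ∞, and ssubreg^(1/q)·lip < 1, then the exact strong q-subregularity bound of the perturbed mapping x ↦ F(x) − g(x̄) + g(x) at (x̄, ȳ) is at most ssubreg/(1 − ssubreg^(1/q)·lip)^q. -/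
open Metric

/-- The exact strong q-subregularity bound of `F` at `(x̄, ȳ)`: the infimum of
all moduli `η > 0` working for some radius `γ > 0`. -/
noncomputable def ssubregBound {X Y : Type*} [NormedAddCommGroup X] [NormedAddCommGroup Y]
    (F : X → Set Y) (xb : X) (yb : Y) (q : ℝ) : ℝ :=
  sInf {η : ℝ | 0 < η ∧ ∃ γ > (0 : ℝ), ∀ x ∈ closedBall xb γ, ∀ y ∈ F x,
    ‖x - xb‖ ≤ η * ‖y - yb‖ ^ q}

/-- The local Lipschitz modulus of `g` at `x̄`: the infimum of all `l ≥ 0` such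
that `g` is `l`-Lipschitz on some neighborhood of `x̄`. -/
noncomputable def lipMod {X Y : Type*} [NormedAddCommGroup X] [NormedAddCommGroup Y]
    (g : X → Y) (xb : X) : ℝ :=
  sInf {l : ℝ | 0 ≤ l ∧ ∃ ε > (0 : ℝ), ∀ x ∈ ball xb ε, ∀ u ∈ ball xb ε,
    ‖g x - g u‖ ≤ l * ‖x - u‖}

lemma ssubreg_key {X Y : Type*} [NormedAddCommGroup X] [NormedAddCommGroup Y]
    (F : X → Set Y) (xb : X) (yb : Y) (g : X → Y) (q : ℝ) (hq : 1 ≤ q)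
    {η lam : ℝ} (hη : 0 < η) (hlam : 0 ≤ lam) (hlt : η ^ ((1:ℝ)/q) * lam < 1)
    {γ : ℝ} (hγ : 0 < γ)
    (hF : ∀ x ∈ closedBall xb γ, ∀ y ∈ F x, ‖x - xb‖ ≤ η * ‖y - yb‖ ^ q)
    {ε : ℝ} (hε : 0 < ε)
    (hg : ∀ x ∈ ball xb ε, ∀ u ∈ ball xb ε, ‖g x - g u‖ ≤ lam * ‖x - u‖) :
    ∃ γ' > (0:ℝ), ∀ x ∈ closedBall xb γ', ∀ w ∈ F x,
      ‖x - xb‖ ≤ η / (1 - η ^ ((1:ℝ)/q) * lam) ^ q * ‖w + g x - g xb - yb‖ ^ q := by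
  have hq0 : 0 < q := lt_of_lt_of_le one_pos hq
  have hc : 0 < 1 - η ^ ((1:ℝ)/q) * lam := by linarith
  have ha : (0:ℝ) ≤ η ^ ((1:ℝ)/q) := Real.rpow_nonneg hη.le _
  refine ⟨min γ (min (ε/2) 1), by positivity, fun x hx w hw => ?_⟩
  have hxγ : x ∈ closedBall xb γ :=
    closedBall_subset_closedBall (min_le_left _ _) hx
  set t := ‖x - xb‖ with htdef
  have ht0 : 0 ≤ t := norm_nonneg _
  have ht : t ≤ η * ‖w - yb‖ ^ q := hF x hxγ w hw
  have hxd : dist x xb ≤ min γ (min (ε/2) 1) := mem_closedBall.mp hx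
  have ht1 : t ≤ 1 := by
    rw [htdef, ← dist_eq_norm]
    exact hxd.trans ((min_le_right _ _).trans (min_le_right _ _))
  have hxball : x ∈ ball xb ε := by
    rw [mem_ball]
    have := hxd.trans ((min_le_right _ _).trans (min_le_left _ _))
    linarith
  have hgl : ‖g x - g xb‖ ≤ lam * t :=
    hg x hxball xb (mem_ball_self hε)
  set Yn := ‖w + g x - g xb - yb‖ with hYdef
  have hY0 : 0 ≤ Yn := norm_nonneg _
  have hRHS0 : (0:ℝ) ≤ η / (1 - η ^ ((1:ℝ)/q) * lam) ^ q * Yn ^ q :=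
    mul_nonneg (div_nonneg hη.le (Real.rpow_nonneg hc.le _)) (Real.rpow_nonneg hY0 _)
  rcases eq_or_lt_of_le ht0 with h0 | ht0'
  · rw [← h0]; exact hRHS0
  -- step 1 : t^(1/q) ≤ η^(1/q) * ‖w - yb‖
  have step1 : t ^ ((1:ℝ)/q) ≤ η ^ ((1:ℝ)/q) * ‖w - yb‖ := by
    calc t ^ ((1:ℝ)/q) ≤ (η * ‖w - yb‖ ^ q) ^ ((1:ℝ)/q) :=
          Real.rpow_le_rpow ht0 ht (by positivity)
      _ = η ^ ((1:ℝ)/q) * (‖w - yb‖ ^ q) ^ ((1:ℝ)/q) :=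
          Real.mul_rpow hη.le (Real.rpow_nonneg (norm_nonneg _) _)
      _ = η ^ ((1:ℝ)/q) * ‖w - yb‖ := by
          rw [← Real.rpow_mul (norm_nonneg _), mul_one_div_cancel hq0.ne', Real.rpow_one]
  have step2 : ‖w - yb‖ ≤ Yn + lam * t := by
    have hid : w - yb = (w + g x - g xb - yb) + (g xb - g x) := by abel
    calc ‖w - yb‖ = ‖(w + g x - g xb - yb) + (g xb - g x)‖ := by rw [← hid]
      _ ≤ Yn + ‖g xb - g x‖ := norm_add_le _ _
      _ ≤ Yn + lam * t := by rw [norm_sub_rev]; linarith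
  have tle : t ≤ t ^ ((1:ℝ)/q) := by
    have h1q : (1:ℝ)/q ≤ 1 := by
      rw [div_le_one hq0]; exact hq
    have := Real.rpow_le_rpow_of_exponent_ge ht0' ht1 h1q
    rwa [Real.rpow_one] at this
  have step3 : t ^ ((1:ℝ)/q) * (1 - η ^ ((1:ℝ)/q) * lam) ≤ η ^ ((1:ℝ)/q) * Yn := by
    have h1 : t ^ ((1:ℝ)/q) ≤ η ^ ((1:ℝ)/q) * (Yn + lam * t) :=
      step1.trans (mul_le_mul_of_nonneg_left step2 ha)
    have h2 : η ^ ((1:ℝ)/q) * lam * t ≤ η ^ ((1:ℝ)/q) * lam * t ^ ((1:ℝ)/q) :=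
      mul_le_mul_of_nonneg_left tle (mul_nonneg ha hlam)
    nlinarith
  have step4 : t ^ ((1:ℝ)/q) ≤ η ^ ((1:ℝ)/q) * Yn / (1 - η ^ ((1:ℝ)/q) * lam) :=
    (le_div_iff₀ hc).mpr step3
  have tfin : t = (t ^ ((1:ℝ)/q)) ^ q := by
    rw [← Real.rpow_mul ht0, one_div_mul_cancel hq0.ne', Real.rpow_one]
  calc t = (t ^ ((1:ℝ)/q)) ^ q := tfin
    _ ≤ (η ^ ((1:ℝ)/q) * Yn / (1 - η ^ ((1:ℝ)/q) * lam)) ^ q :=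
        Real.rpow_le_rpow (Real.rpow_nonneg ht0 _) step4 hq0.le
    _ = η / (1 - η ^ ((1:ℝ)/q) * lam) ^ q * Yn ^ q := by
        rw [Real.div_rpow (mul_nonneg ha hY0) hc.le,
          Real.mul_rpow ha hY0, ← Real.rpow_mul hη.le, one_div_mul_cancel hq0.ne',
          Real.rpow_one]
        ring

/-- estimate for the exact strong q-subregularity bound of the
perturbed mapping `x ↦ F(x) - g(x̄) + g(x)`. -/
theorem ssubregBound_of_perturbed_le
    {X Y : Type*} [NormedAddCommGroup X] [CompleteSpace X] [NormedAddCommGroup Y]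
    (F : X → Set Y) (xb : X) (yb : Y) (hyb : yb ∈ F xb)
    (g : X → Y) (q : ℝ) (hq : 1 ≤ q)
    (hFfin : {η : ℝ | 0 < η ∧ ∃ γ > (0 : ℝ), ∀ x ∈ closedBall xb γ, ∀ y ∈ F x,
      ‖x - xb‖ ≤ η * ‖y - yb‖ ^ q}.Nonempty)
    (hgfin : {l : ℝ | 0 ≤ l ∧ ∃ ε > (0 : ℝ), ∀ x ∈ ball xb ε, ∀ u ∈ ball xb ε,
      ‖g x - g u‖ ≤ l * ‖x - u‖}.Nonempty)
    (hpos : 0 < ssubregBound F xb yb q)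
    (hsmall : ssubregBound F xb yb q ^ ((1 : ℝ) / q) * lipMod g xb < 1) :
    (∃ η > (0 : ℝ), ∃ γ > (0 : ℝ), ∀ x ∈ closedBall xb γ, ∀ w ∈ F x,
      ‖x - xb‖ ≤ η * ‖w + g x - g xb - yb‖ ^ q) ∧
    ssubregBound (fun x => (fun w => w + g x - g xb) '' F x) xb yb q ≤
      ssubregBound F xb yb q /
        (1 - ssubregBound F xb yb q ^ ((1 : ℝ) / q) * lipMod g xb) ^ q := by
  have hq0 : 0 < q := lt_of_lt_of_le one_pos hq
  set s := ssubregBound F xb yb q with hs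
  set l := lipMod g xb with hl
  have hl0 : 0 ≤ l := Real.sInf_nonneg (fun x hx => hx.1)
  -- main construction : for any δ > 0 with (s+δ)^(1/q)*(l+δ) < 1, we get a modulus
  have main : ∀ δ > (0:ℝ), (s+δ) ^ ((1:ℝ)/q) * (l+δ) < 1 →
      ∃ m, (0 < m ∧ ∃ γ' > (0:ℝ), ∀ x ∈ closedBall xb γ', ∀ y ∈
          (fun w => w + g x - g xb) '' F x, ‖x - xb‖ ≤ m * ‖y - yb‖ ^ q) ∧
        m ≤ (s+δ) / (1 - (s+δ) ^ ((1:ℝ)/q) * (l+δ)) ^ q := by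
    intro δ hδ hδ1
    obtain ⟨η, hηmem, hηlt⟩ := Real.lt_sInf_add_pos hFfin hδ
    obtain ⟨lam', hlammem, hlamlt⟩ := Real.lt_sInf_add_pos hgfin hδ
    obtain ⟨hη0, γ, hγ0, hFγ⟩ := hηmem
    obtain ⟨hlam0, ε, hε0, hgε⟩ := hlammem
    have hηlt' : η < s + δ := hηlt
    have hlamlt' : lam' < l + δ := hlamlt
    have hmono : η ^ ((1:ℝ)/q) * lam' ≤ (s+δ) ^ ((1:ℝ)/q) * (l+δ) :=
      mul_le_mul (Real.rpow_le_rpow hη0.le hηlt'.le (by positivity)) hlamlt'.le hlam0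
        (Real.rpow_nonneg (by linarith) _)
    have hlt : η ^ ((1:ℝ)/q) * lam' < 1 := lt_of_le_of_lt hmono hδ1
    have hc : 0 < 1 - η ^ ((1:ℝ)/q) * lam' := by linarith
    have hcδ : 0 < 1 - (s+δ) ^ ((1:ℝ)/q) * (l+δ) := by linarith
    obtain ⟨γ', hγ'0, hkey⟩ := ssubreg_key F xb yb g q hq hη0 hlam0 hlt hγ0 hFγ hε0 hgε
    refine ⟨η / (1 - η ^ ((1:ℝ)/q) * lam') ^ q,
      ⟨by positivity, γ', hγ'0, fun x hx y hy => ?_⟩, ?_⟩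
    · obtain ⟨w, hw, rfl⟩ := hy
      exact hkey x hx w hw
    · apply div_le_div₀ (by linarith) hηlt'.le (by positivity)
      exact Real.rpow_le_rpow hcδ.le (by linarith) hq0.le
  refine ⟨?_, ?_⟩
  · -- part 1
    obtain ⟨δ, hδ, hδ1⟩ : ∃ δ > (0:ℝ), (s+δ) ^ ((1:ℝ)/q) * (l+δ) < 1 := by
      have hcont : ContinuousAt (fun δ : ℝ => (s+δ) ^ ((1:ℝ)/q) * (l+δ)) 0 := by
        apply ContinuousAt.mul
        · exact (Real.continuousAt_rpow_const _ _ (by left; simpa using hpos.ne')).comp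
            (by fun_prop)
        · fun_prop
      have h0 : (fun δ : ℝ => (s+δ) ^ ((1:ℝ)/q) * (l+δ)) 0 < 1 := by simpa using hsmall
      have := hcont.eventually_lt_const h0
      obtain ⟨δ, hδ1, hδ⟩ := (((this.filter_mono nhdsWithin_le_nhds).and
        (eventually_mem_nhdsWithin (s := Set.Ioi (0:ℝ)))).exists)
      exact ⟨δ, hδ, hδ1⟩
    obtain ⟨m, ⟨hm0, γ', hγ'0, hmod⟩, _⟩ := main δ hδ hδ1
    exact ⟨m, hm0, γ', hγ'0, fun x hx w hw => hmod x hx _ ⟨w, hw, rfl⟩⟩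
  · -- part 2
    apply le_of_forall_pos_le_add
    intro ε' hε'
    set tgt := s / (1 - s ^ ((1:ℝ)/q) * l) ^ q with htgt
    have hcont1 : ContinuousAt (fun δ : ℝ => (s+δ) ^ ((1:ℝ)/q) * (l+δ)) 0 := by
      apply ContinuousAt.mul
      · exact (Real.continuousAt_rpow_const _ _ (by left; simpa using hpos.ne')).comp
          (by fun_prop)
      · fun_prop
    have hcδ0 : (0:ℝ) < 1 - s ^ ((1:ℝ)/q) * l := by
      simpa using sub_pos.mpr hsmall
    have hcont2 : ContinuousAt
        (fun δ : ℝ => (s+δ) / (1 - (s+δ) ^ ((1:ℝ)/q) * (l+δ)) ^ q) 0 := by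
      apply ContinuousAt.div
      · fun_prop
      · exact (Real.continuousAt_rpow_const _ _
          (by left; simpa using hcδ0.ne')).comp (by fun_prop)
      · simp only [add_zero]
        exact (Real.rpow_pos_of_pos hcδ0 q).ne'
    have h1 : ∀ᶠ δ in nhds (0:ℝ), (s+δ) ^ ((1:ℝ)/q) * (l+δ) < 1 :=
      hcont1.eventually_lt_const (by simpa using hsmall)
    have h2 : ∀ᶠ δ in nhds (0:ℝ),
        (s+δ) / (1 - (s+δ) ^ ((1:ℝ)/q) * (l+δ)) ^ q < tgt + ε' :=
      hcont2.eventually_lt_const (by simp only [add_zero, htgt]; linarith)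
    obtain ⟨δ, ⟨hδ1, hδ2⟩, hδ⟩ := ((((h1.and h2).filter_mono nhdsWithin_le_nhds).and
      (eventually_mem_nhdsWithin (s := Set.Ioi (0:ℝ)))).exists)
    obtain ⟨m, hmmem, hmle⟩ := main δ hδ hδ1
    have hbdd : BddBelow {η : ℝ | 0 < η ∧ ∃ γ > (0 : ℝ), ∀ x ∈ closedBall xb γ, ∀ y ∈
        (fun w => w + g x - g xb) '' F x, ‖x - xb‖ ≤ η * ‖y - yb‖ ^ q} :=
      ⟨0, fun x hx => hx.1.le⟩
    have : ssubregBound (fun x => (fun w => w + g x - g xb) '' F x) xb yb q ≤ m :=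
      csInf_le hbdd hmmem
    linarith
end

section
/- Let X be a Banach space, Y a normed space, F : X → Set Y with ȳ ∈ F(x̄), and q ≥ 1, and suppose 0 < ssubreg^q F(x̄, ȳ) < ∞. Then for every single-valued mapping g : X → Y that is locally Lipschitz around x̄ and such that the perturbed mapping x ↦ F(x) − g(x̄) + g(x) is NOT strongly metrically q-subregular at (x̄, ȳ), one has lip g(x̄) ≥ (ssubreg^q F(x̄, ȳ))^(−1/q). Equivalently, the infimum of lip g(x̄) over all locally Lipschitz perturbations g destroying strong q-subregularity is at least (ssubreg^q F(x̄, ȳ))^(−1/q). -/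
open Metric

/-- any locally Lipschitzian perturbation `g` destroying strong
metric q-subregularity must satisfy `lip g(x̄) ≥ (ssubreg^q F(x̄, ȳ))^(-1/q)`. -/
theorem perturbation_radius_strong_q_subregularity
    {X Y : Type*} [NormedAddCommGroup X] [CompleteSpace X] [NormedAddCommGroup Y]
    (F : X → Set Y) (xb : X) (yb : Y) (hyb : yb ∈ F xb)
    (q : ℝ) (hq : 1 ≤ q)
    (hFfin : {η : ℝ | 0 < η ∧ ∃ γ > (0 : ℝ), ∀ x ∈ closedBall xb γ, ∀ y ∈ F x,
      ‖x - xb‖ ≤ η * ‖y - yb‖ ^ q}.Nonempty)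
    (hpos : 0 < ssubregBound F xb yb q) :
    ∀ g : X → Y,
      {l : ℝ | 0 ≤ l ∧ ∃ ε > (0 : ℝ), ∀ x ∈ ball xb ε, ∀ u ∈ ball xb ε,
        ‖g x - g u‖ ≤ l * ‖x - u‖}.Nonempty →
      ¬ (∃ η > (0 : ℝ), ∃ γ > (0 : ℝ), ∀ x ∈ closedBall xb γ, ∀ w ∈ F x,
        ‖x - xb‖ ≤ η * ‖w + g x - g xb - yb‖ ^ q) →
      ssubregBound F xb yb q ^ (-(1 : ℝ) / q) ≤ lipMod g xb := by
 
  intro g hgne hnot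
  by_contra hlt
  push_neg at hlt
  apply hnot
  have hq0 : (0:ℝ) < q := lt_of_lt_of_le one_pos hq
  set s := ssubregBound F xb yb q with hs_def
  have hspow : 0 < s ^ (-(1:ℝ)/q) := Real.rpow_pos_of_pos hpos _
  -- extract a Lipschitz constant l below s^{-1/q}
  have hbdd : BddBelow {l : ℝ | 0 ≤ l ∧ ∃ ε > (0 : ℝ), ∀ x ∈ ball xb ε, ∀ u ∈ ball xb ε,
      ‖g x - g u‖ ≤ l * ‖x - u‖} := ⟨0, fun x hx => hx.1⟩
  rw [lipMod] at hlt
  obtain ⟨l, ⟨hl0, ε, hε, hLip⟩, hll⟩ := (csInf_lt_iff hbdd hgne).1 hlt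
  set lam := (l + s ^ (-(1:ℝ)/q)) / 2 with hlam_def
  have hlam0 : 0 < lam := by positivity
  have hllam : l ≤ lam := by simp only [hlam_def]; linarith
  have hlamlt : lam < s ^ (-(1:ℝ)/q) := by simp only [hlam_def]; linarith
  have hlamq : 0 < lam ^ q := Real.rpow_pos_of_pos hlam0 _
  have h1 : lam ^ q < s⁻¹ := by
    have h := Real.rpow_lt_rpow hlam0.le hlamlt hq0
    rwa [← Real.rpow_mul hpos.le, div_mul_cancel₀ _ (ne_of_gt hq0),
      Real.rpow_neg_one] at h
  have h2 : s < (lam ^ q)⁻¹ := (lt_inv_comm₀ hlamq hpos).1 h1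
  -- extract η below (lam^q)⁻¹
  have hbdd2 : BddBelow {η : ℝ | 0 < η ∧ ∃ γ > (0 : ℝ), ∀ x ∈ closedBall xb γ, ∀ y ∈ F x,
      ‖x - xb‖ ≤ η * ‖y - yb‖ ^ q} := ⟨0, fun x hx => hx.1.le⟩
  rw [hs_def, ssubregBound] at h2
  obtain ⟨η, ⟨hη0, γ, hγ, hsub⟩, hηlt⟩ := (csInf_lt_iff hbdd2 hFfin).1 h2
  have hc : η * lam ^ q < 1 := by
    have h := mul_lt_mul_of_pos_right hηlt hlamq
    rwa [inv_mul_cancel₀ (ne_of_gt hlamq)] at h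
  have hc0 : 0 < η * lam ^ q := mul_pos hη0 hlamq
  -- set up ρ and K
  set ρ := (η * lam ^ q) ^ (1/q : ℝ) with hρ_def
  have hρ0 : 0 < ρ := Real.rpow_pos_of_pos hc0 _
  have hρ1 : ρ < 1 := Real.rpow_lt_one hc0.le hc (by positivity)
  have hρq : ρ ^ q = η * lam ^ q := by
    rw [hρ_def, ← Real.rpow_mul hc0.le, one_div_mul_cancel (ne_of_gt hq0), Real.rpow_one]
  set K := 2 * ρ / (1 - ρ) with hK_def
  have hK0 : 0 < K := by
    apply div_pos (by linarith) (by linarith)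
  refine ⟨η * (1 + K) ^ q, by positivity, min γ (min (ε/2) 1),
    lt_min hγ (lt_min (half_pos hε) one_pos), ?_⟩
  intro x hx w hw
  rw [mem_closedBall, dist_eq_norm] at hx
  set t := ‖x - xb‖ with ht_def
  have ht0 : 0 ≤ t := norm_nonneg _
  have ht1 : t ≤ 1 := hx.trans ((min_le_right _ _).trans (min_le_right _ _))
  have hxγ : x ∈ closedBall xb γ := by
    rw [mem_closedBall, dist_eq_norm]
    exact hx.trans (min_le_left _ _)
  have hxε : x ∈ ball xb ε := by
    rw [mem_ball, dist_eq_norm]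
    calc ‖x - xb‖ ≤ ε/2 := hx.trans ((min_le_right _ _).trans (min_le_left _ _))
    _ < ε := by linarith
  have hgx : ‖g x - g xb‖ ≤ lam * t :=
    (hLip x hxε xb (mem_ball_self hε)).trans
      (mul_le_mul_of_nonneg_right hllam ht0)
  set r := ‖w + g x - g xb - yb‖ with hr_def
  have hr0 : 0 ≤ r := norm_nonneg _
  have hwr : ‖w - yb‖ ≤ r + lam * t := by
    have heq : w - yb = (w + g x - g xb - yb) - (g x - g xb) := by abel
    rw [heq]
    exact (norm_sub_le _ _).trans (by linarith)
  have hkey : t ≤ η * (r + lam * t) ^ q :=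
    (hsub x hxγ w hw).trans
      (mul_le_mul_of_nonneg_left (Real.rpow_le_rpow (norm_nonneg _) hwr hq0.le) hη0.le)
  by_cases hcase : lam * t ≤ K * r
  · -- main case
    have h3 : r + lam * t ≤ (1 + K) * r := by linarith
    calc t ≤ η * (r + lam * t) ^ q := hkey
    _ ≤ η * ((1 + K) * r) ^ q :=
        mul_le_mul_of_nonneg_left
          (Real.rpow_le_rpow (by positivity) h3 hq0.le) hη0.le
    _ = η * (1 + K) ^ q * r ^ q := by
        rw [Real.mul_rpow (by positivity) hr0, mul_assoc]
  · -- contradiction case: t must be 0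
    push_neg at hcase
    rcases eq_or_lt_of_le ht0 with h0 | h0
    · rw [← h0]; positivity
    exfalso
    have hrlt : r ≤ lam * t / K := le_of_lt ((lt_div_iff₀ hK0).2 (by linarith))
    have heqK : (1 + 1/K) * (lam * t) = lam * t / K + lam * t := by
      field_simp; ring
    have h3 : r + lam * t ≤ (1 + 1/K) * (lam * t) := by
      rw [heqK]; linarith
    have h4 : t ≤ η * ((1 + 1/K) * (lam * t)) ^ q :=
      hkey.trans (mul_le_mul_of_nonneg_left
        (Real.rpow_le_rpow (by positivity) h3 hq0.le) hη0.le)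
    have h1K : (1:ℝ) + 1/K = (1 + ρ) / (2 * ρ) := by
      rw [hK_def]; field_simp; ring
    have hM : η * ((1 + 1/K) * (lam * t)) ^ q = ((1 + ρ)/2) ^ q * t ^ q := by
      rw [Real.mul_rpow (by positivity) (by positivity),
        Real.mul_rpow hlam0.le ht0, h1K]
      have : η * (((1 + ρ) / (2 * ρ)) ^ q * (lam ^ q * t ^ q))
          = ((1 + ρ) / (2 * ρ)) ^ q * (η * lam ^ q) * t ^ q := by ring
      rw [this, ← hρq, ← Real.mul_rpow (by positivity) (by positivity)]
      congr 2
      field_simp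
    have hMlt : ((1 + ρ)/2) ^ q < 1 :=
      Real.rpow_lt_one (by positivity) (by linarith) hq0
    have htq : t ^ q ≤ t := by
      have := Real.rpow_le_rpow_of_exponent_ge h0 ht1 hq
      rwa [Real.rpow_one] at this
    have hM0 : 0 ≤ ((1 + ρ)/2) ^ q := by positivity
    rw [hM] at h4
    have h5 : t ≤ ((1 + ρ)/2) ^ q * t := h4.trans (mul_le_mul_of_nonneg_left htq hM0)
    have h6 : ((1 + ρ)/2) ^ q * t < 1 * t := mul_lt_mul_of_pos_right hMlt h0
    linarith
end

section
/- Let X and Y be Banach spaces, F : X → Set Y a set-valued mapping, q ≥ 1, and g : X → Y continuously differentiable on a neighborhood of x̄ with derivative ∇g. Assume the mapping G : x ↦ g(x̄) + ∇g(x̄)(x − x̄) + F(x) is strongly metrically q-subregular at (x̄, ȳ) with modulus κ > 0, where ȳ ∈ G(x̄). Then for every λ > κ there exist γ > 0 and η > 0 such that for every parameter u in the closed ball B(x̄, γ), every x in the closed ball B(x̄, η), and every z ∈ g(x̄) + ∇g(u)(x − x̄) + F(x), one has ‖x − x̄‖ ≤ λ·‖z − ȳ‖^q. -/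
/-!
Write `A(x) = g(x̄) + ∇g(x̄)(x - x̄)` and `A_u(x) = g(x̄) + ∇g(u)(x - x̄)`. Then
`‖A_u(x) - A(x)‖ ≤ ‖∇g(u) - ∇g(x̄)‖ ‖x - x̄‖`, and by continuity of `∇g` the operator norm is
below any `ε > 0` once `u` is close to `x̄`. Taking `q`-th roots, the subregularity of `A + F`
reads `‖x - x̄‖^(1/q) ≤ κ^(1/q) ‖A(x) + w - ȳ‖`, and for `‖x - x̄‖ ≤ 1` the perturbation
`ε ‖x - x̄‖` is at most `ε ‖x - x̄‖^(1/q)` because `q ≥ 1`; so it can be absorbed on the left,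
and `ε = κ^(-1/q) - λ^(-1/q)` leaves exactly the modulus `λ`.
-/

open Metric

namespace Real

lemma le_mul_rpow_iff_rpow_inv_le {q c t a : ℝ} (hq : 0 < q) (hc : 0 ≤ c) (ht : 0 ≤ t)
    (ha : 0 ≤ a) : t ≤ c * a ^ q ↔ t ^ q⁻¹ ≤ c ^ q⁻¹ * a := by
  rw [rpow_inv_le_iff_of_pos ht (by positivity) hq, mul_rpow (by positivity) ha,
    rpow_inv_rpow hc hq.ne']

lemma le_mul_rpow_of_le_add {q κ lam t a b : ℝ} (hq : 1 ≤ q) (hκ : 0 < κ) (hlam : κ < lam)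
    (ht : 0 ≤ t) (ht1 : t ≤ 1) (ha : 0 ≤ a) (hb : 0 ≤ b) (hta : t ≤ κ * a ^ q)
    (hab : a ≤ b + ((κ ^ q⁻¹)⁻¹ - (lam ^ q⁻¹)⁻¹) * t) : t ≤ lam * b ^ q := by
  have hq0 : 0 < q := zero_lt_one.trans_le hq
  set s := t ^ q⁻¹
  set k := κ ^ q⁻¹
  set l := lam ^ q⁻¹
  have hk : 0 < k := rpow_pos_of_pos hκ _
  have hkl : k < l := rpow_lt_rpow hκ.le hlam (inv_pos.2 hq0)
  have hts : t ≤ s := self_le_rpow_of_le_one ht ht1 (inv_le_one_of_one_le₀ hq)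
  have hsa : s ≤ k * a := (le_mul_rpow_iff_rpow_inv_le hq0 hκ.le ht ha).1 hta
  have hε : 0 ≤ k⁻¹ - l⁻¹ := sub_nonneg.2 (inv_anti₀ hk hkl.le)
  have hl : 0 < l := hk.trans hkl
  have hsab : s ≤ k * (b + (k⁻¹ - l⁻¹) * s) :=
    hsa.trans (mul_le_mul_of_nonneg_left
      (hab.trans (add_le_add_right (mul_le_mul_of_nonneg_left hts hε) _)) hk.le)
  have hsl : s ≤ l * b := by
    rw [mul_add, ← mul_assoc, mul_sub, mul_inv_cancel₀ hk.ne'] at hsab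
    have : k * (l⁻¹ * s) ≤ k * b := by linarith
    rwa [← div_eq_inv_mul, mul_le_mul_iff_right₀ hk, div_le_iff₀' hl] at this
  exact (le_mul_rpow_iff_rpow_inv_le hq0 (hκ.le.trans hlam.le) ht hb).2 hsl

end Real

section Perturbation

variable {X Y : Type*} [NormedAddCommGroup X] [NormedAddCommGroup Y]

theorem norm_sub_le_mul_rpow_of_perturbation {F : X → Set Y} {φ ψ : X → Y} {xb : X} {yb : Y}
    {q κ lam γ : ℝ} (hq : 1 ≤ q) (hκ : 0 < κ) (hlam : κ < lam)
    (hsub : ∀ x ∈ closedBall xb γ, ∀ w ∈ F x, ‖x - xb‖ ≤ κ * ‖φ x + w - yb‖ ^ q)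
    (hψ : ∀ x, ‖ψ x - φ x‖ ≤ ((κ ^ q⁻¹)⁻¹ - (lam ^ q⁻¹)⁻¹) * ‖x - xb‖) :
    ∀ x ∈ closedBall xb (min γ 1), ∀ w ∈ F x, ‖x - xb‖ ≤ lam * ‖ψ x + w - yb‖ ^ q := by
  intro x hx w hw
  rw [mem_closedBall_iff_norm, le_min_iff] at hx
  refine Real.le_mul_rpow_of_le_add hq hκ hlam (norm_nonneg _) hx.2 (norm_nonneg _)
    (norm_nonneg _) (hsub x (mem_closedBall_iff_norm.2 hx.1) w hw) ?_
  calc ‖φ x + w - yb‖ = ‖(ψ x + w - yb) - (ψ x - φ x)‖ := by congr 1; abel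
    _ ≤ ‖ψ x + w - yb‖ + ‖ψ x - φ x‖ := norm_sub_le _ _
    _ ≤ _ := add_le_add_right (hψ x) _

end Perturbation

theorem strong_q_subregularity_parameterized_general
    {X Y : Type*} [NormedAddCommGroup X] [NormedSpace ℝ X]
    [NormedAddCommGroup Y] [NormedSpace ℝ Y]
    (F : X → Set Y) (q : ℝ) (hq : 1 ≤ q)
    (g : X → Y) (g' : X → X →L[ℝ] Y) (xb : X) (δ : ℝ) (hδ : 0 < δ)
    (hcont : ContinuousOn g' (ball xb δ))
    (yb : Y)
    (κ : ℝ) (hκ : 0 < κ)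
    (hG : ∃ γ₀ > (0 : ℝ), ∀ x ∈ closedBall xb γ₀, ∀ w ∈ F x,
      ‖x - xb‖ ≤ κ * ‖g xb + (g' xb) (x - xb) + w - yb‖ ^ q) :
    ∀ lam : ℝ, κ < lam →
      ∃ γ > (0 : ℝ), ∃ η > (0 : ℝ), ∀ u ∈ closedBall xb γ, ∀ x ∈ closedBall xb η,
        ∀ w ∈ F x, ‖x - xb‖ ≤ lam * ‖g xb + (g' u) (x - xb) + w - yb‖ ^ q := by
  intro lam hlam
  obtain ⟨γ₀, hγ₀, hsub⟩ := hG
  set ε := (κ ^ q⁻¹)⁻¹ - (lam ^ q⁻¹)⁻¹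
  have hε : 0 < ε := sub_pos.2 <| inv_strictAnti₀ (Real.rpow_pos_of_pos hκ _) <|
    Real.rpow_lt_rpow hκ.le hlam (inv_pos.2 (zero_lt_one.trans_le hq))
  have hg' : ContinuousAt g' xb := hcont.continuousAt (isOpen_ball.mem_nhds (mem_ball_self hδ))
  obtain ⟨γ, hγ, hclose⟩ := nhds_basis_closedBall.eventually_iff.1 <|
    hg'.eventually (closedBall_mem_nhds (g' xb) hε)
  refine ⟨γ, hγ, min γ₀ 1, lt_min hγ₀ one_pos, fun u hu => ?_⟩
  refine norm_sub_le_mul_rpow_of_perturbation hq hκ hlam hsub fun x => ?_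
  calc ‖g xb + (g' u) (x - xb) - (g xb + (g' xb) (x - xb))‖ = ‖(g' u - g' xb) (x - xb)‖ := by
        simp
    _ ≤ ‖g' u - g' xb‖ * ‖x - xb‖ := (g' u - g' xb).le_opNorm _
    _ ≤ ε * ‖x - xb‖ := by
        gcongr
        exact mem_closedBall_iff_norm.1 (hclose hu)

/-- strong metric q-subregularity of the partial linearization
`G : x ↦ g(x̄) + ∇g(x̄)(x - x̄) + F(x)` with modulus `κ` propagates, with any
modulus `λ > κ`, to the parameterized mappings
`x ↦ g(x̄) + ∇g(u)(x - x̄) + F(x)` uniformly in `u` near `x̄`. -/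
theorem strong_q_subregularity_parameterized
    {X Y : Type*} [NormedAddCommGroup X] [NormedSpace ℝ X] [CompleteSpace X]
    [NormedAddCommGroup Y] [NormedSpace ℝ Y] [CompleteSpace Y]
    (F : X → Set Y) (q : ℝ) (hq : 1 ≤ q)
    (g : X → Y) (g' : X → X →L[ℝ] Y) (xb : X) (δ : ℝ) (hδ : 0 < δ)
    (hderiv : ∀ x ∈ ball xb δ, HasFDerivAt g (g' x) x)
    (hcont : ContinuousOn g' (ball xb δ))
    (yb : Y) (hyb : yb ∈ (fun w => g xb + (g' xb) (xb - xb) + w) '' F xb)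
    (κ : ℝ) (hκ : 0 < κ)
    (hG : ∃ γ₀ > (0 : ℝ), ∀ x ∈ closedBall xb γ₀, ∀ w ∈ F x,
      ‖x - xb‖ ≤ κ * ‖g xb + (g' xb) (x - xb) + w - yb‖ ^ q) :
    ∀ lam : ℝ, κ < lam →
      ∃ γ > (0 : ℝ), ∃ η > (0 : ℝ), ∀ u ∈ closedBall xb γ, ∀ x ∈ closedBall xb η,
        ∀ w ∈ F x, ‖x - xb‖ ≤ lam * ‖g xb + (g' u) (x - xb) + w - yb‖ ^ q :=
  strong_q_subregularity_parameterized_general F q hq g g' xb δ hδ hcont yb κ hκ hG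
end

section
/- Let X and Y be Banach spaces, let U be a convex open neighborhood of x̄ on which g : X → Y is continuously differentiable with derivative ∇g, let F : X → Set Y be a set-valued mapping, and let q ≥ 1. Assume: (a) 0 ∈ g(x̄) + F(x̄); (b) F is strongly metrically q-subregular at (x̄, −g(x̄)) with modulus κ > 0, i.e., there is γ > 0 such that ‖x − x̄‖ ≤ κ·‖y + g(x̄)‖^q for all x ∈ B(x̄, γ) and all y ∈ F(x); (c) there is λ with λ·κ^(1/q) < 1 such that g is λ-Lipschitz on some neighborhood of x̄; (d) (x_k) is a sequence in U with x_k → x̄ and x_k ≠ x̄ for all k, and (B_k) is a sequence of continuous linear operators X → Y satisfying the quasi-Newton iteration 0 ∈ g(x_k) + B_k(x_{k+1} − x_k) + F(x_{k+1}) for all k; (e) the Dennis–Moré condition holds: there is a sequence ε_k → 0 of nonnegative reals with ‖(B_k − ∇g(x̄))(x_{k+1} − x_k)‖ ≤ ε_k·‖x_{k+1} − x_k‖ for all k. Then ‖x_{k+1} − x̄‖/‖x_k − x̄‖^q → 0 as k → ∞. -/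
open Metric Filter

set_option maxHeartbeats 1000000

/-- convergence rate of order `q` for quasi-Newton iterations
solving the generalized equation `0 ∈ g(x) + F(x)` under strong metric
q-subregularity of `F` at `(x̄, -g(x̄))` and the Dennis–Moré condition. -/
theorem quasi_newton_convergence_rate
    {X Y : Type*} [NormedAddCommGroup X] [NormedSpace ℝ X] [CompleteSpace X]
    [NormedAddCommGroup Y] [NormedSpace ℝ Y] [CompleteSpace Y]
    (U : Set X) (hUopen : IsOpen U) (hUconv : Convex ℝ U)
    (xb : X) (hxbU : xb ∈ U)
    (g : X → Y) (g' : X → X →L[ℝ] Y)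
    (hderiv : ∀ x ∈ U, HasFDerivAt g (g' x) x) (hcont : ContinuousOn g' U)
    (F : X → Set Y) (q : ℝ) (hq : 1 ≤ q)
    -- (a) x̄ solves the generalized equation 0 ∈ g(x) + F(x)
    (hsol : -g xb ∈ F xb)
    -- (b) F is strongly metrically q-subregular at (x̄, -g(x̄)) with modulus κ
    (κ γ : ℝ) (hκ : 0 < κ) (hγ : 0 < γ)
    (hsub : ∀ x ∈ closedBall xb γ, ∀ y ∈ F x, ‖x - xb‖ ≤ κ * ‖y + g xb‖ ^ q)
    -- (c) g is λ-Lipschitz near x̄ with λ·κ^(1/q) < 1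
    (lam : ℝ) (hlam0 : 0 ≤ lam) (hlam : lam * κ ^ ((1 : ℝ) / q) < 1)
    (ε : ℝ) (hε : 0 < ε)
    (hlip : ∀ x ∈ ball xb ε, ∀ u ∈ ball xb ε, ‖g x - g u‖ ≤ lam * ‖x - u‖)
    -- (d) the quasi-Newton iterates
    (x_ : ℕ → X) (hxU : ∀ k, x_ k ∈ U)
    (hconv : Tendsto x_ atTop (nhds xb)) (hne : ∀ k, x_ k ≠ xb)
    (B : ℕ → X →L[ℝ] Y)
    (hiter : ∀ k, -(g (x_ k) + (B k) (x_ (k + 1) - x_ k)) ∈ F (x_ (k + 1)))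
    -- (e) the Dennis–Moré condition
    (eps : ℕ → ℝ) (heps0 : ∀ k, 0 ≤ eps k) (hepslim : Tendsto eps atTop (nhds 0))
    (hDM : ∀ k, ‖(B k) (x_ (k + 1) - x_ k) - (g' xb) (x_ (k + 1) - x_ k)‖ ≤
      eps k * ‖x_ (k + 1) - x_ k‖) :
    Tendsto (fun k => ‖x_ (k + 1) - xb‖ / ‖x_ k - xb‖ ^ q) atTop (nhds 0) := by

  have hq0 : (0:ℝ) < q := lt_of_lt_of_le one_pos hq
  set a : ℝ := κ ^ ((1:ℝ)/q) with ha_def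
  have ha0 : 0 < a := Real.rpow_pos_of_pos hκ _
  have hden : 0 < 1 - lam * a := by linarith
  set C : ℝ := a / (1 - lam * a) with hC_def
  have hC0 : 0 < C := div_pos ha0 hden
  have hepos : ∀ k, (0:ℝ) < ‖x_ k - xb‖ :=
    fun k => norm_pos_iff.mpr (sub_ne_zero.mpr (hne k))
  rw [Metric.tendsto_nhds]
  intro δ hδ
  -- choose ρ
  have h8 : (0:ℝ) < 8 * C + 8 := by linarith
  have hδq : 0 < δ ^ ((1:ℝ)/q) := Real.rpow_pos_of_pos hδ _
  set ρ : ℝ := min (1 / (8 * C + 8)) (δ ^ ((1:ℝ)/q) / (8 * C + 8)) with hρ_def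
  have hρ0 : 0 < ρ := lt_min (by positivity) (by positivity)
  have hρa : ρ ≤ 1 / (8 * C + 8) := min_le_left _ _
  have hρb : ρ ≤ δ ^ ((1:ℝ)/q) / (8 * C + 8) := min_le_right _ _
  have hρ1 : C * (2 * ρ) ≤ 1/2 := by
    have h1 : ρ * (8 * C + 8) ≤ 1 := (le_div_iff₀ h8).mp hρa
    nlinarith [mul_pos hC0 hρ0]
  have hρ2 : 4 * C * ρ < δ ^ ((1:ℝ)/q) := by
    have h1 : ρ * (8 * C + 8) ≤ δ ^ ((1:ℝ)/q) := (le_div_iff₀ h8).mp hρb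
    nlinarith [mul_pos hC0 hρ0]
  -- continuity of g' at xb
  have hcontx : ContinuousAt g' xb := hcont.continuousAt (hUopen.mem_nhds hxbU)
  obtain ⟨r0, hr00, hr0⟩ := Metric.continuousAt_iff.mp hcontx ρ hρ0
  obtain ⟨r1, hr10, hr1U⟩ := Metric.isOpen_iff.mp hUopen xb hxbU
  set r : ℝ := min r0 (min r1 (min 1 (min ε γ))) with hr_def
  have hr0' : 0 < r := by
    refine lt_min hr00 (lt_min hr10 (lt_min one_pos (lt_min hε hγ)))
  have hrr0 : r ≤ r0 := min_le_left _ _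
  have hrr1 : r ≤ r1 := le_trans (min_le_right _ _) (min_le_left _ _)
  have hr1' : r ≤ 1 := le_trans (min_le_right _ _) (le_trans (min_le_right _ _) (min_le_left _ _))
  have hrε : r ≤ ε := le_trans (min_le_right _ _) (le_trans (min_le_right _ _)
    (le_trans (min_le_right _ _) (min_le_left _ _)))
  have hrγ : r ≤ γ := le_trans (min_le_right _ _) (le_trans (min_le_right _ _)
    (le_trans (min_le_right _ _) (min_le_right _ _)))
  have hballU : ball xb r ⊆ U := fun z hz => hr1U (lt_of_lt_of_le hz hrr1)
  have hg'bound : ∀ z ∈ ball xb r, ‖g' z - g' xb‖ ≤ ρ := by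
    intro z hz
    have := hr0 (lt_of_lt_of_le (mem_ball.mp hz) hrr0)
    rw [dist_eq_norm] at this
    exact this.le
  -- eventual facts
  have hconv' : Tendsto (fun k => x_ (k+1)) atTop (nhds xb) :=
    hconv.comp (tendsto_add_atTop_nat 1)
  have E1 : ∀ᶠ k in atTop, x_ k ∈ ball xb r := hconv (ball_mem_nhds xb hr0')
  have E2 : ∀ᶠ k in atTop, x_ (k+1) ∈ ball xb r := hconv' (ball_mem_nhds xb hr0')
  have E3 : ∀ᶠ k in atTop, eps k ≤ ρ := hepslim.eventually (eventually_le_nhds hρ0)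
  filter_upwards [E1, E2, E3] with k hk hk1 hke
  set e0 : ℝ := ‖x_ k - xb‖ with he0_def
  set e1 : ℝ := ‖x_ (k+1) - xb‖ with he1_def
  have he0pos : 0 < e0 := hepos k
  have he1pos : 0 < e1 := hepos (k+1)
  have he1le1 : e1 ≤ 1 := by
    have := mem_ball.mp hk1
    rw [dist_eq_norm] at this
    exact le_trans this.le hr1'
  -- mean value inequality
  have hmvt : ‖g (x_ (k+1)) - g (x_ k) - (g' xb) (x_ (k+1) - x_ k)‖
      ≤ ρ * ‖x_ (k+1) - x_ k‖ := by
    have := Convex.norm_image_sub_le_of_norm_hasFDerivWithin_le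
      (f := fun z => g z - g' xb z) (f' := fun z => g' z - g' xb) (s := ball xb r)
      (fun z hz => ((hderiv z (hballU hz)).sub ((g' xb).hasFDerivAt)).hasFDerivWithinAt)
      hg'bound (convex_ball xb r) hk hk1
    have heq : (fun z => g z - g' xb z) (x_ (k+1)) - (fun z => g z - g' xb z) (x_ k)
        = g (x_ (k+1)) - g (x_ k) - (g' xb) (x_ (k+1) - x_ k) := by
      simp only [map_sub]
      abel
    rwa [heq] at this
  -- Lipschitz estimate
  have hballε : ∀ z ∈ ball xb r, z ∈ ball xb ε := fun z hz =>
    mem_ball.mpr (lt_of_lt_of_le (mem_ball.mp hz) hrε)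
  have hg1 : ‖g xb - g (x_ (k+1))‖ ≤ lam * e1 := by
    have := hlip xb (mem_ball_self hε) (x_ (k+1)) (hballε _ hk1)
    rwa [norm_sub_rev xb] at this
  -- norm of step
  have hs_le : ‖x_ (k+1) - x_ k‖ ≤ e1 + e0 := by
    have : x_ (k+1) - x_ k = (x_ (k+1) - xb) - (x_ k - xb) := by abel
    rw [this]
    exact norm_sub_le _ _
  -- main residual bound
  set t : ℝ := lam * e1 + (ρ + eps k) * (e0 + e1) with ht_def
  have ht0 : 0 ≤ t := by
    have := heps0 k
    positivity
  have hres : ‖-(g (x_ k) + (B k) (x_ (k+1) - x_ k)) + g xb‖ ≤ t := by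
    have hdecomp : -(g (x_ k) + (B k) (x_ (k+1) - x_ k)) + g xb
        = (g xb - g (x_ (k+1)))
          + (g (x_ (k+1)) - g (x_ k) - (g' xb) (x_ (k+1) - x_ k))
          + ((g' xb) (x_ (k+1) - x_ k) - (B k) (x_ (k+1) - x_ k)) := by abel
    rw [hdecomp]
    have hDM' : ‖(g' xb) (x_ (k+1) - x_ k) - (B k) (x_ (k+1) - x_ k)‖
        ≤ eps k * ‖x_ (k+1) - x_ k‖ := by
      rw [norm_sub_rev]; exact hDM k
    have htri : ‖(g xb - g (x_ (k+1)))
          + (g (x_ (k+1)) - g (x_ k) - (g' xb) (x_ (k+1) - x_ k))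
          + ((g' xb) (x_ (k+1) - x_ k) - (B k) (x_ (k+1) - x_ k))‖
        ≤ ‖g xb - g (x_ (k+1))‖
          + ‖g (x_ (k+1)) - g (x_ k) - (g' xb) (x_ (k+1) - x_ k)‖
          + ‖(g' xb) (x_ (k+1) - x_ k) - (B k) (x_ (k+1) - x_ k)‖ := norm_add₃_le
    have h1 : ρ * ‖x_ (k+1) - x_ k‖ ≤ ρ * (e1 + e0) :=
      mul_le_mul_of_nonneg_left hs_le hρ0.le
    have h2 : eps k * ‖x_ (k+1) - x_ k‖ ≤ eps k * (e1 + e0) :=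
      mul_le_mul_of_nonneg_left hs_le (heps0 k)
    rw [ht_def]
    linarith [hg1, hmvt, hDM', htri, h1, h2]
  -- subregularity
  have hmem : x_ (k+1) ∈ closedBall xb γ :=
    mem_closedBall.mpr (le_trans (mem_ball.mp hk1).le hrγ)
  have hkey : e1 ≤ κ * t ^ q := by
    have h := hsub (x_ (k+1)) hmem _ (hiter k)
    calc e1 ≤ κ * ‖-(g (x_ k) + (B k) (x_ (k+1) - x_ k)) + g xb‖ ^ q := h
      _ ≤ κ * t ^ q := by
          gcongr
  -- take q-th roots
  set E : ℝ := e1 ^ ((1:ℝ)/q) with hE_def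
  have hE0 : 0 < E := Real.rpow_pos_of_pos he1pos _
  have hEroot : E ≤ a * t := by
    have h1 : e1 ^ ((1:ℝ)/q) ≤ (κ * t ^ q) ^ ((1:ℝ)/q) :=
      Real.rpow_le_rpow he1pos.le hkey (by positivity)
    have h2 : (κ * t ^ q) ^ ((1:ℝ)/q) = a * t := by
      rw [Real.mul_rpow hκ.le (Real.rpow_nonneg ht0 _), ← Real.rpow_mul ht0,
        mul_one_div_cancel hq0.ne', Real.rpow_one]
    rw [hE_def, ← h2]; exact h1
  have he1E : e1 ≤ E := by
    have := Real.rpow_le_rpow_of_exponent_ge he1pos he1le1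
      (by rw [div_le_one hq0]; exact hq : (1:ℝ)/q ≤ 1)
    rwa [Real.rpow_one] at this
  have hEC : E ≤ C * ((ρ + eps k) * (e0 + e1)) := by
    have h1 : E ≤ lam * a * E + a * ((ρ + eps k) * (e0 + e1)) := by
      have : a * t = a * lam * e1 + a * ((ρ + eps k) * (e0 + e1)) := by rw [ht_def]; ring
      have h2 : a * lam * e1 ≤ a * lam * E := by
        apply mul_le_mul_of_nonneg_left he1E (by positivity)
      nlinarith [hEroot]
    rw [hC_def, div_mul_eq_mul_div, le_div_iff₀ hden]
    nlinarith
  have hu0 : 0 ≤ (ρ + eps k) * (e0 + e1) := by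
    have := heps0 k; positivity
  have hhalf : E ≤ (1/2) * (e0 + e1) := by
    have h1 : C * ((ρ + eps k) * (e0 + e1)) ≤ (C * (2 * ρ)) * (e0 + e1) := by
      have : C * (ρ + eps k) ≤ C * (2 * ρ) := by
        apply mul_le_mul_of_nonneg_left (by linarith) hC0.le
      nlinarith [he0pos.le, he1pos.le]
    have h2 : (C * (2 * ρ)) * (e0 + e1) ≤ (1/2) * (e0 + e1) := by
      apply mul_le_mul_of_nonneg_right hρ1 (by positivity)
    linarith [hEC]
  have he1e0 : e1 ≤ e0 := by linarith [he1E, hhalf]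
  have hEfinal : E ≤ 4 * C * ρ * e0 := by
    have h1 : E ≤ C * ((ρ + eps k) * (e0 + e1)) := hEC
    have h2 : (ρ + eps k) * (e0 + e1) ≤ (2 * ρ) * (2 * e0) := by
      apply mul_le_mul (by linarith) (by linarith) (by positivity) (by positivity)
    calc E ≤ C * ((2 * ρ) * (2 * e0)) := by
            refine le_trans h1 (mul_le_mul_of_nonneg_left h2 hC0.le)
      _ = 4 * C * ρ * e0 := by ring
  -- raise back to power q
  have he1final : e1 ≤ (4 * C * ρ) ^ q * e0 ^ q := by
    have h1 : E ^ q ≤ (4 * C * ρ * e0) ^ q :=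
      Real.rpow_le_rpow hE0.le hEfinal hq0.le
    have h2 : E ^ q = e1 := by
      rw [hE_def, ← Real.rpow_mul he1pos.le, one_div_mul_cancel hq0.ne', Real.rpow_one]
    have h3 : (4 * C * ρ * e0) ^ q = (4 * C * ρ) ^ q * e0 ^ q :=
      Real.mul_rpow (by positivity) he0pos.le
    rw [← h2, ← h3]; exact h1
  -- conclude
  have he0q : 0 < e0 ^ q := Real.rpow_pos_of_pos he0pos _
  have hratio : e1 / e0 ^ q < δ := by
    have h1 : e1 / e0 ^ q ≤ (4 * C * ρ) ^ q := by
      rw [div_le_iff₀ he0q]; exact he1final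
    have h2 : (4 * C * ρ) ^ q < (δ ^ ((1:ℝ)/q)) ^ q :=
      Real.rpow_lt_rpow (by positivity) hρ2 hq0
    have h3 : (δ ^ ((1:ℝ)/q)) ^ q = δ := by
      rw [← Real.rpow_mul hδ.le, one_div_mul_cancel hq0.ne', Real.rpow_one]
    linarith
  rw [Real.dist_eq, sub_zero, abs_of_nonneg (by positivity)]
  exact hratio
end
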